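/- arXiv:2404.07147 — 5 statements merged into one kernel-verified Lean document; each statement's English description precedes it below -/
import Mathlib

section
/- Let E be a finite set with h = |E| ≥ 1, let (λ_e)_{e∈E} be independent random variables each uniformly distributed on [0,1], and fix e₀ ∈ E. Then for every δ ∈ [0,1], P(λ_{e₀} < λ_e ≤ λ_{e₀} + δ for all e ∈ E \ {e₀}) = δ^{h−1}(1−δ) + δ^h / h. -/
/-!
By independence the joint law of `(λ_e)` is the product of uniform laws. Integrating out
the coordinate `e₀` first, the other `h - 1` coordinates must fall independently into
`(t, t + δ] ∩ [0, 1]`, of length `min δ (1 - t)`, so the probability is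
`∫₀¹ min δ u ^ (h - 1) du`, which splits at `u = δ` into the two terms of the formula.
-/

open MeasureTheory ProbabilityTheory Set

namespace MeasureTheory.Measure

theorem pi_setOf_forall_ne_mem_eq_lintegral {α ι : Type*} [MeasurableSpace α] [Fintype ι]
    (ν : Measure α) [SigmaFinite ν] (i₀ : ι) {s : Set (α × α)} (hs : MeasurableSet s) :
    Measure.pi (fun _ : ι => ν) {f | ∀ i, i ≠ i₀ → (f i₀, f i) ∈ s}
      = ∫⁻ x, ν (Prod.mk x ⁻¹' s) ^ (Fintype.card ι - 1) ∂ν := by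
  classical
  let B : Set ((Π _ : {i // i = i₀}, α) × (Π _ : {i // ¬ i = i₀}, α)) :=
    {q | ∀ j, (q.1 ⟨i₀, rfl⟩, q.2 j) ∈ s}
  have hB : MeasurableSet B := by
    have : B = ⋂ j, (fun q => (q.1 ⟨i₀, rfl⟩, q.2 j)) ⁻¹' s := by ext; simp [B]
    rw [this]
    exact .iInter fun j => hs.preimage (by fun_prop)
  have hset : {f : ι → α | ∀ i, i ≠ i₀ → (f i₀, f i) ∈ s}
      = MeasurableEquiv.piEquivPiSubtypeProd (fun _ => α) (· = i₀) ⁻¹' B := by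
    ext f; simp [B, MeasurableEquiv.piEquivPiSubtypeProd, Equiv.piEquivPiSubtypeProd]
  have hslice (x : Π _ : {i // i = i₀}, α) :
      Prod.mk x ⁻¹' B = univ.pi fun _ => Prod.mk (x ⟨i₀, rfl⟩) ⁻¹' s := by
    ext; simp [B]
  have hg : Measurable fun x => ν (Prod.mk x ⁻¹' s) ^ (Fintype.card ι - 1) :=
    (measurable_measure_prodMk_left hs).pow_const _
  rw [hset, (measurePreserving_piEquivPiSubtypeProd (fun _ => ν) (· = i₀)).measure_preimage
    hB.nullMeasurableSet, Measure.prod_apply hB]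
  simp_rw [hslice, Measure.pi_pi, Finset.prod_const, Finset.card_univ,
    Fintype.card_subtype_compl, Fintype.card_subtype_eq]
  convert (measurePreserving_piUnique (fun _ : {i // i = i₀} => ν)).lintegral_comp hg
  rfl

end MeasureTheory.Measure

theorem volume_restrict_Icc_Ioc_add {t δ : ℝ} (ht : t ∈ Icc (0 : ℝ) 1) :
    volume.restrict (Icc (0 : ℝ) 1) (Ioc t (t + δ)) = ENNReal.ofReal (min δ (1 - t)) := by
  rw [Measure.restrict_congr_set Ioc_ae_eq_Icc.symm, Measure.restrict_apply measurableSet_Ioc,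
    Ioc_inter_Ioc, Real.volume_Ioc, max_eq_left ht.1, ← min_sub_sub_right, add_sub_cancel_left]

theorem integral_min_const_pow {δ : ℝ} (hδ0 : 0 ≤ δ) (hδ1 : δ ≤ 1) (n : ℕ) :
    ∫ u in (0 : ℝ)..1, min δ u ^ n = δ ^ (n + 1) / (n + 1) + δ ^ n * (1 - δ) := by
  have hc : Continuous fun u : ℝ => min δ u ^ n := by fun_prop
  rw [← intervalIntegral.integral_add_adjacent_intervals (b := δ) (hc.intervalIntegrable _ _)
    (hc.intervalIntegrable _ _)]
  congr 1
  · rw [intervalIntegral.integral_congr (g := fun u => u ^ n) fun u hu => ?_, integral_pow]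
    · simp
    · rw [uIcc_of_le hδ0] at hu
      rw [min_eq_right hu.2]
  · rw [intervalIntegral.integral_congr (g := fun _ => δ ^ n) fun u hu => ?_,
      intervalIntegral.integral_const, smul_eq_mul, mul_comm]
    rw [uIcc_of_le hδ1] at hu
    rw [min_eq_left hu.1]

theorem setLIntegral_Icc_volume_restrict_Ioc_add_pow {δ : ℝ} (hδ0 : 0 ≤ δ) (hδ1 : δ ≤ 1)
    (n : ℕ) :
    ∫⁻ t in Icc (0 : ℝ) 1, volume.restrict (Icc (0 : ℝ) 1) (Ioc t (t + δ)) ^ n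
      = ENNReal.ofReal (δ ^ n * (1 - δ) + δ ^ (n + 1) / (n + 1)) := by
  have hnonneg : ∀ t ∈ Icc (0 : ℝ) 1, 0 ≤ min δ (1 - t) :=
    fun t ht => le_min hδ0 (sub_nonneg.2 ht.2)
  calc ∫⁻ t in Icc (0 : ℝ) 1, volume.restrict (Icc (0 : ℝ) 1) (Ioc t (t + δ)) ^ n
      = ∫⁻ t in Icc (0 : ℝ) 1, ENNReal.ofReal (min δ (1 - t) ^ n) :=
        setLIntegral_congr_fun measurableSet_Icc fun t ht => by
          rw [volume_restrict_Icc_Ioc_add ht, ENNReal.ofReal_pow (hnonneg t ht)]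
    _ = ENNReal.ofReal (∫ t in (0 : ℝ)..1, min δ (1 - t) ^ n) := by
        rw [intervalIntegral.integral_of_le zero_le_one, ← integral_Icc_eq_integral_Ioc,
          ofReal_integral_eq_lintegral_ofReal (Continuous.integrableOn_Icc (by fun_prop))
          (ae_restrict_of_forall_mem measurableSet_Icc fun t ht => pow_nonneg (hnonneg t ht) n)]
    _ = ENNReal.ofReal (δ ^ n * (1 - δ) + δ ^ (n + 1) / (n + 1)) := by
        rw [intervalIntegral.integral_comp_sub_left (fun u => min δ u ^ n), sub_self, sub_zero,
          integral_min_const_pow hδ0 hδ1, add_comm]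

theorem stmt4_general
    {Ω : Type*} [MeasurableSpace Ω] (P : Measure Ω)
    {E : Type*} [Fintype E] (h : ℕ) (hh : Fintype.card E = h) (hh1 : 1 ≤ h)
    (lam : E → Ω → ℝ) (hmeas : ∀ e, Measurable (lam e))
    (hindep : iIndepFun lam P)
    (hunif : ∀ e, Measure.map (lam e) P = (volume : Measure ℝ).restrict (Set.Icc 0 1))
    (e₀ : E) (δ : ℝ) (hδ0 : 0 ≤ δ) (hδ1 : δ ≤ 1) :
    P {ω | ∀ e : E, e ≠ e₀ → lam e₀ ω < lam e ω ∧ lam e ω ≤ lam e₀ ω + δ}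
      = ENNReal.ofReal (δ ^ (h - 1) * (1 - δ) + δ ^ h / (h : ℝ)) := by
  obtain ⟨n, rfl⟩ := Nat.exists_eq_add_of_le' hh1
  let s : Set (ℝ × ℝ) := {p | p.1 < p.2 ∧ p.2 ≤ p.1 + δ}
  have hs : MeasurableSet s :=
    (measurableSet_lt measurable_fst measurable_snd).inter
      (measurableSet_le measurable_snd (by fun_prop))
  have hA : MeasurableSet {f : E → ℝ | ∀ e, e ≠ e₀ → (f e₀, f e) ∈ s} := by
    simp only [ofPred_forall]
    exact .iInter fun e => .iInter fun _ => hs.preimage (by fun_prop)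
  have hjoint : P.map (fun ω e => lam e ω)
      = Measure.pi fun _ => volume.restrict (Icc (0 : ℝ) 1) := by
    rw [hindep.map_fun_eq_pi_map fun e => (hmeas e).aemeasurable]
    simp_rw [hunif]
  calc P {ω | ∀ e : E, e ≠ e₀ → lam e₀ ω < lam e ω ∧ lam e ω ≤ lam e₀ ω + δ}
      = P.map (fun ω e => lam e ω) {f | ∀ e, e ≠ e₀ → (f e₀, f e) ∈ s} :=
        (Measure.map_apply (measurable_pi_lambda _ hmeas) hA).symm
    _ = _ := by
        rw [hjoint, Measure.pi_setOf_forall_ne_mem_eq_lintegral _ e₀ hs, hh, Nat.add_sub_cancel,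
          Nat.cast_add_one]
        exact setLIntegral_Icc_volume_restrict_Ioc_add_pow hδ0 hδ1 n

/-- For independent uniform-[0,1] labels `lam e`, `e ∈ E`, with `|E| = h ≥ 1`,
a fixed `e₀ ∈ E`, and any `δ ∈ [0,1]`,
`P(lam e₀ < lam e ≤ lam e₀ + δ for all e ≠ e₀) = δ^(h-1) (1-δ) + δ^h / h`. -/
theorem stmt4
    {Ω : Type*} [MeasurableSpace Ω] (P : Measure Ω) [IsProbabilityMeasure P]
    {E : Type*} [Fintype E] (h : ℕ) (hh : Fintype.card E = h) (hh1 : 1 ≤ h)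
    (lam : E → Ω → ℝ) (hmeas : ∀ e, Measurable (lam e))
    (hindep : iIndepFun lam P)
    (hunif : ∀ e, Measure.map (lam e) P = (volume : Measure ℝ).restrict (Set.Icc 0 1))
    (e₀ : E) (δ : ℝ) (hδ0 : 0 ≤ δ) (hδ1 : δ ≤ 1) :
    P {ω | ∀ e : E, e ≠ e₀ → lam e₀ ω < lam e ω ∧ lam e ω ≤ lam e₀ ω + δ}
      = ENNReal.ofReal (δ ^ (h - 1) * (1 - δ) + δ ^ h / (h : ℝ)) :=
  stmt4_general P h hh hh1 lam hmeas hindep hunif e₀ δ hδ0 hδ1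
end

section
/- Let n ≥ 2, let (K_n, λ) be a random simple temporal graph on n vertices, let δ ∈ [0,1], and let k be an integer with 2 ≤ k ≤ n. Then the expected number of δ-temporal cliques of size k satisfies E[X^{(k)}] = C(n,k) · ( C(k,2) · δ^{C(k,2)−1} · (1−δ) + δ^{C(k,2)} ), where C(a,b) denotes the binomial coefficient. -/
open MeasureTheory ProbabilityTheory

/-- The edge set of the complete graph `K_n` on vertex set `Fin n`:
unordered pairs of distinct vertices. -/
def EdgeKn (n : ℕ) : Type := {e : Sym2 (Fin n) // ¬ e.IsDiag}

/-- `Q` is a `δ`-temporal clique for the labeling `lam` if any two edges with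
both endpoints in `Q` carry labels at most `δ` apart. -/
def IsTemporalClique {n : ℕ} (lam : EdgeKn n → ℝ) (δ : ℝ) (Q : Finset (Fin n)) : Prop :=
  ∀ e e' : EdgeKn n, (∀ v ∈ e.1, v ∈ Q) → (∀ v ∈ e'.1, v ∈ Q) →
    |lam e - lam e'| ≤ δ

open scoped Classical in
/-- The number of `k`-element vertex subsets of `Fin n` that are `δ`-temporal cliques. -/
noncomputable def cliqueCount {n : ℕ} (lam : EdgeKn n → ℝ) (δ : ℝ) (k : ℕ) : ℕ :=
  ((Finset.univ.powersetCard k).filter (fun Q => IsTemporalClique lam δ Q)).card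

/-!
By linearity, `E[X^{(k)}]` is the sum over `k`-sets `Q` of the probability that `Q` is a
`δ`-temporal clique, and the `m = C(k,2)` labels inside `Q` are i.i.d. uniform on `[0,1]`.
Their range is at most `δ` iff some label `x_i` is the minimum and all others lie in
`[x_i, x_i + δ]`; these `m` events overlap only on ties, a null set. Conditioning on `x_i = a`,
the event has probability `(min (a + δ) 1 - a)^(m-1)`, whose integral over `[0,1]` is
`(1 - δ) δ^(m-1) + δ^m / m`; multiplying by `m` gives `m δ^(m-1) (1 - δ) + δ^m`.
For `m = 0` every `k`-set is a clique, and the formula also evaluates to `1`.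
-/

open Set

local notation "unif01" => Measure.restrict (volume : Measure ℝ) (Icc (0:ℝ) 1)

lemma unif01_Icc {a : ℝ} (ha : a ∈ Icc (0:ℝ) 1) (δ : ℝ) :
    unif01 (Icc a (a + δ)) = ENNReal.ofReal (min (a + δ) 1 - a) := by
  rw [Measure.restrict_apply measurableSet_Icc, Icc_inter_Icc, Real.volume_Icc, max_eq_left ha.1]

instance : IsProbabilityMeasure unif01 := ⟨by simp⟩

lemma pi_setOf_removeNth {α : Type*} [MeasurableSpace α] {r : ℕ} (μ : Measure α) [SigmaFinite μ]
    (i : Fin (r + 1)) {p : α → (Fin r → α) → Prop}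
    (hp : MeasurableSet {q : α × (Fin r → α) | p q.1 q.2}) :
    Measure.pi (fun _ => μ) {x | p (x i) (i.removeNth x)} =
      ∫⁻ a, Measure.pi (fun _ => μ) {y | p a y} ∂μ :=
  ((measurePreserving_piFinSuccAbove (fun _ => μ) i).measure_preimage
    hp.nullMeasurableSet).trans (Measure.prod_apply hp)

lemma pi_setOf_eq_eq_zero {α : Type*} [MeasurableSpace α] [MeasurableEq α] {r : ℕ}
    (μ : Measure α) [SigmaFinite μ] [NullSingletonClass μ] {i j : Fin (r + 1)} (hij : i ≠ j) :
    Measure.pi (fun _ => μ) {x | x i = x j} = 0 := by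
  obtain ⟨j, rfl⟩ := Fin.exists_succAbove_eq hij.symm
  have hp : MeasurableSet {q : α × (Fin r → α) | q.1 = q.2 j} :=
    measurableSet_eq_fun measurable_fst ((measurable_pi_apply j).comp measurable_snd)
  refine (pi_setOf_removeNth μ i (p := fun a y => a = y j) hp).trans ?_
  have hsec (a : α) : {y : Fin r → α | a = y j} = Function.eval j ⁻¹' ({a} : Set α) := by
    ext y; exact eq_comm
  simp only [hsec, Measure.pi_eval_preimage_null _ (measure_singleton _), lintegral_zero]

lemma integral_min_add_sub_pow (r : ℕ) {δ : ℝ} (h0 : 0 ≤ δ) (h1 : δ ≤ 1) :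
    ∫ a in Icc (0:ℝ) 1, (min (a + δ) 1 - a) ^ r = (1 - δ) * δ ^ r + δ ^ (r + 1) / (r + 1) := by
  have hcont : Continuous fun a : ℝ => (min (a + δ) 1 - a) ^ r := by fun_prop
  rw [integral_Icc_eq_integral_Ioc, ← intervalIntegral.integral_of_le zero_le_one,
    ← intervalIntegral.integral_add_adjacent_intervals
      (hcont.intervalIntegrable 0 (1 - δ)) (hcont.intervalIntegrable (1 - δ) 1)]
  have hleft : ∫ a in (0:ℝ)..(1 - δ), (min (a + δ) 1 - a) ^ r = (1 - δ) * δ ^ r := by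
    rw [intervalIntegral.integral_congr (g := fun _ => δ ^ r), intervalIntegral.integral_const,
      smul_eq_mul, sub_zero]
    intro a ha
    rw [uIcc_of_le (by linarith)] at ha
    simp only [min_eq_left (by linarith [ha.2] : a + δ ≤ 1), add_sub_cancel_left]
  have hright : ∫ a in (1 - δ)..1, (min (a + δ) 1 - a) ^ r = δ ^ (r + 1) / (r + 1) := by
    rw [intervalIntegral.integral_congr (g := fun a => (1 - a) ^ r),
      intervalIntegral.integral_comp_sub_left (fun x => x ^ r)]
    · norm_num [integral_pow]
    · intro a ha
      rw [uIcc_of_le (by linarith)] at ha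
      simp only [min_eq_right (by linarith [ha.1] : (1:ℝ) ≤ a + δ)]
  rw [hleft, hright]

lemma pi_unif01_setOf_window (r : ℕ) {δ : ℝ} (h0 : 0 ≤ δ) (h1 : δ ≤ 1) (i : Fin (r + 1)) :
    Measure.pi (fun _ => unif01) {x | ∀ j, x i ≤ x j ∧ x j ≤ x i + δ} =
      ENNReal.ofReal ((1 - δ) * δ ^ r + δ ^ (r + 1) / (r + 1)) := by
  have hp : MeasurableSet {q : ℝ × (Fin r → ℝ) | q.2 ∈ univ.pi fun _ => Icc q.1 (q.1 + δ)} := by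
    simp only [mem_univ_pi, mem_Icc]
    measurability
  have hset : {x : Fin (r + 1) → ℝ | ∀ j, x i ≤ x j ∧ x j ≤ x i + δ} =
      {x | (i.removeNth x : Fin r → ℝ) ∈ univ.pi fun _ => Icc (x i) (x i + δ)} := by
    ext x
    simp only [mem_ofPred_eq, mem_univ_pi, mem_Icc, Fin.removeNth_apply, i.forall_iff_succAbove,
      le_refl, le_add_iff_nonneg_right, h0, and_self, true_and]
  have hsec (a : ℝ) (ha : a ∈ Icc (0:ℝ) 1) :
      Measure.pi (fun _ => unif01) (univ.pi fun _ : Fin r => Icc a (a + δ)) =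
        ENNReal.ofReal ((min (a + δ) 1 - a) ^ r) := by
    have : a ≤ min (a + δ) 1 := le_min (by linarith) ha.2
    rw [Measure.pi_pi, Finset.prod_const, Finset.card_univ, Fintype.card_fin, unif01_Icc ha,
      ENNReal.ofReal_pow (by linarith)]
  rw [hset, pi_setOf_removeNth _ i (p := fun a y => y ∈ univ.pi fun _ => Icc a (a + δ)) hp]
  simp only [ofPred_mem_eq]
  rw [setLIntegral_congr_fun measurableSet_Icc hsec,
    ← ofReal_integral_eq_lintegral_ofReal, integral_min_add_sub_pow r h0 h1]
  · exact (by fun_prop : Continuous fun a : ℝ => (min (a + δ) 1 - a) ^ r).integrableOn_Icc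
  · refine (ae_restrict_iff' measurableSet_Icc).2 (.of_forall fun a ha => ?_)
    exact pow_nonneg (sub_nonneg.2 (le_min (by linarith) ha.2)) r

def withinWidth (ι : Type*) (δ : ℝ) : Set (ι → ℝ) := {x | ∀ i j, |x i - x j| ≤ δ}

lemma measurableSet_withinWidth {ι : Type*} [Countable ι] (δ : ℝ) :
    MeasurableSet (withinWidth ι δ) := by
  simp only [withinWidth, ofPred_forall]
  exact .iInter fun i => .iInter fun j => measurableSet_le (by fun_prop) measurable_const

lemma withinWidth_eq_iUnion {ι : Type*} [Finite ι] [Nonempty ι] (δ : ℝ) :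
    withinWidth ι δ = ⋃ i, {x | ∀ j, x i ≤ x j ∧ x j ≤ x i + δ} := by
  ext x
  simp only [withinWidth, mem_ofPred_eq, mem_iUnion]
  constructor
  · intro h
    obtain ⟨i, hi⟩ := Finite.exists_min x
    exact ⟨i, fun j => ⟨hi j, by linarith [(abs_le.1 (h j i)).2]⟩⟩
  · rintro ⟨i, hi⟩ j k
    rw [abs_le]
    constructor <;> linarith [hi j, hi k]

lemma pi_unif01_withinWidth_fin (r : ℕ) {δ : ℝ} (h0 : 0 ≤ δ) (h1 : δ ≤ 1) :
    Measure.pi (fun _ => unif01) (withinWidth (Fin (r + 1)) δ) =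
      ENNReal.ofReal ((r + 1) * δ ^ r * (1 - δ) + δ ^ (r + 1)) := by
  have hmeas (i : Fin (r + 1)) :
      MeasurableSet {x : Fin (r + 1) → ℝ | ∀ j, x i ≤ x j ∧ x j ≤ x i + δ} := by
    measurability
  have hdisj : Pairwise fun i j => AEDisjoint (Measure.pi fun _ => unif01)
      {x : Fin (r + 1) → ℝ | ∀ j, x i ≤ x j ∧ x j ≤ x i + δ}
      {x | ∀ k, x j ≤ x k ∧ x k ≤ x j + δ} := fun i j hij =>
    measure_mono_null (fun x hx => le_antisymm (hx.1 j).1 (hx.2 i).1)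
      (pi_setOf_eq_eq_zero _ hij)
  rw [withinWidth_eq_iUnion, measure_iUnion₀ hdisj fun i => (hmeas i).nullMeasurableSet,
    tsum_fintype]
  simp only [pi_unif01_setOf_window r h0 h1, Finset.sum_const, Finset.card_univ,
    Fintype.card_fin, nsmul_eq_mul]
  rw [← ENNReal.ofReal_natCast, ← ENNReal.ofReal_mul (by positivity)]
  congr 1
  push_cast
  field_simp

lemma pi_unif01_withinWidth {ι : Type*} [Fintype ι] {δ : ℝ} (h0 : 0 ≤ δ) (h1 : δ ≤ 1) :
    Measure.pi (fun _ : ι => unif01) (withinWidth ι δ) =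
      ENNReal.ofReal (Fintype.card ι * δ ^ (Fintype.card ι - 1) * (1 - δ) +
        δ ^ Fintype.card ι) := by
  cases isEmpty_or_nonempty ι
  · simp [withinWidth]
  obtain ⟨r, hr⟩ : ∃ r, Fintype.card ι = r + 1 := Nat.exists_eq_add_one.2 Fintype.card_pos
  let e : Fin (r + 1) ≃ ι := (Fintype.equivFinOfCardEq hr).symm
  have hpre : MeasurableEquiv.piCongrLeft (fun _ => ℝ) e ⁻¹' withinWidth ι δ =
      withinWidth (Fin (r + 1)) δ := by
    ext x
    simp only [withinWidth, mem_preimage, mem_ofPred_eq, e.forall_congr_right.symm,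
      MeasurableEquiv.piCongrLeft_apply_apply]
  rw [← (measurePreserving_piCongrLeft (fun _ => unif01) e).measure_preimage
    (measurableSet_withinWidth δ).nullMeasurableSet, hpre, pi_unif01_withinWidth_fin r h0 h1, hr]
  simp

instance (n : ℕ) : Fintype (EdgeKn n) :=
  inferInstanceAs (Fintype {e : Sym2 (Fin n) // ¬ e.IsDiag})

lemma card_edgeKn_subset {n : ℕ} (Q : Finset (Fin n)) :
    Fintype.card {e : EdgeKn n // ∀ v ∈ e.1, v ∈ Q} = Q.card.choose 2 := by
  classical
  rw [← Sym2.card_image_offDiag, ← Fintype.card_coe]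
  refine Fintype.card_congr
    ((Equiv.subtypeSubtypeEquivSubtypeInter (fun z : Sym2 (Fin n) => ¬ z.IsDiag)
      (fun z => ∀ v ∈ z, v ∈ Q)).trans (Equiv.subtypeEquivRight fun z => ?_))
  induction z using Sym2.ind with
  | _ a b =>
    simp only [Finset.mem_image, Finset.mem_offDiag, Prod.exists, Function.uncurry_apply_pair]
    grind [Sym2.mk_isDiag_iff, Sym2.eq_iff]

lemma pi_preimage_restrict_subtype {ι α : Type*} [Fintype ι] [MeasurableSpace α]
    (μ : ι → Measure α) [∀ i, IsProbabilityMeasure (μ i)] (p : ι → Prop) [DecidablePred p]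
    {s : Set ({i // p i} → α)} (hs : MeasurableSet s) :
    Measure.pi μ ((fun x (i : {i // p i}) => x i) ⁻¹' s) =
      Measure.pi (fun i : {i // p i} => μ i) s :=
  (measurePreserving_fst.comp (measurePreserving_piEquivPiSubtypeProd μ p)).measure_preimage
    hs.nullMeasurableSet

lemma setOf_isTemporalClique {n : ℕ} (δ : ℝ) (Q : Finset (Fin n)) :
    {x : EdgeKn n → ℝ | IsTemporalClique x δ Q} =
      (fun x (e : {e : EdgeKn n // ∀ v ∈ e.1, v ∈ Q}) => x e) ⁻¹' withinWidth _ δ := by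
  ext x
  simp only [IsTemporalClique, withinWidth, mem_preimage, mem_ofPred_eq, Subtype.forall]
  tauto

lemma pi_unif01_isTemporalClique {n k : ℕ} {δ : ℝ} (h0 : 0 ≤ δ) (h1 : δ ≤ 1)
    {Q : Finset (Fin n)} (hQ : Q.card = k) :
    Measure.pi (fun _ => unif01) {x : EdgeKn n → ℝ | IsTemporalClique x δ Q} =
      ENNReal.ofReal (k.choose 2 * δ ^ (k.choose 2 - 1) * (1 - δ) + δ ^ k.choose 2) := by
  classical
  rw [setOf_isTemporalClique, pi_preimage_restrict_subtype _ _ (measurableSet_withinWidth δ),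
    pi_unif01_withinWidth h0 h1, card_edgeKn_subset, hQ]

lemma integral_card_filter {Ω α : Type*} [MeasurableSpace Ω] {P : Measure Ω}
    [IsFiniteMeasure P] (s : Finset α) {p : α → Ω → Prop} [∀ a ω, Decidable (p a ω)]
    (hp : ∀ a ∈ s, MeasurableSet {ω | p a ω}) :
    ∫ ω, ((s.filter fun a => p a ω).card : ℝ) ∂P = ∑ a ∈ s, P.real {ω | p a ω} := by
  have hsum (ω : Ω) : ((s.filter fun a => p a ω).card : ℝ) =
      ∑ a ∈ s, {ω | p a ω}.indicator 1 ω := by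
    simp only [Finset.natCast_card_filter, indicator_apply, mem_ofPred_eq, Pi.one_apply]
  simp_rw [hsum]
  rw [integral_finsetSum _ fun a ha => (integrable_const 1).indicator (hp a ha)]
  exact Finset.sum_congr rfl fun a ha => integral_indicator_one (hp a ha)

theorem stmt5_general
    {Ω : Type*} [MeasurableSpace Ω] (P : Measure Ω) [IsProbabilityMeasure P]
    (n : ℕ)
    (lam : EdgeKn n → Ω → ℝ) (hmeas : ∀ e, Measurable (lam e))
    (hindep : iIndepFun lam P)
    (hunif : ∀ e, Measure.map (lam e) P = (volume : Measure ℝ).restrict (Set.Icc 0 1))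
    (δ : ℝ) (hδ0 : 0 ≤ δ) (hδ1 : δ ≤ 1) (k : ℕ) :
    ∫ ω, (cliqueCount (fun e => lam e ω) δ k : ℝ) ∂P
      = (n.choose k : ℝ) *
        ((k.choose 2 : ℝ) * δ ^ (k.choose 2 - 1) * (1 - δ) + δ ^ (k.choose 2)) := by
  classical
  have hX : Measurable fun ω e => lam e ω := measurable_pi_lambda _ hmeas
  have hlaw : P.map (fun ω e => lam e ω) = Measure.pi fun _ => unif01 := by
    rw [hindep.map_fun_eq_pi_map fun e => (hmeas e).aemeasurable]
    exact congrArg Measure.pi (funext hunif)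
  have hclique (Q : Finset (Fin n)) :
      MeasurableSet {x : EdgeKn n → ℝ | IsTemporalClique x δ Q} := by
    rw [setOf_isTemporalClique]
    exact (measurableSet_withinWidth δ).preimage (by fun_prop)
  have hprob (Q : Finset (Fin n)) (hQ : Q ∈ Finset.univ.powersetCard k) :
      P.real {ω | IsTemporalClique (fun e => lam e ω) δ Q} =
        k.choose 2 * δ ^ (k.choose 2 - 1) * (1 - δ) + δ ^ k.choose 2 := by
    rw [measureReal_def, ← preimage_ofPred_eq (p := fun x => IsTemporalClique x δ Q),
      ← Measure.map_apply hX (hclique Q), hlaw,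
      pi_unif01_isTemporalClique hδ0 hδ1 (Finset.mem_powersetCard.1 hQ).2,
      ENNReal.toReal_ofReal (add_nonneg
        (mul_nonneg (by positivity) (sub_nonneg.2 hδ1)) (by positivity))]
  unfold cliqueCount
  rw [integral_card_filter (p := fun Q ω => IsTemporalClique (fun e => lam e ω) δ Q) _
      fun Q _ => hX (hclique Q), Finset.sum_congr rfl hprob,
    Finset.sum_const, Finset.card_powersetCard, Finset.card_univ, Fintype.card_fin, nsmul_eq_mul]

/-- In the random simple temporal graph `(K_n, λ)`, for `δ ∈ [0,1]` and
`2 ≤ k ≤ n`, the expected number of `δ`-temporal cliques of size `k` equals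
`C(n,k) (C(k,2) δ^(C(k,2)-1) (1-δ) + δ^(C(k,2)))`. -/
theorem stmt5
    {Ω : Type*} [MeasurableSpace Ω] (P : Measure Ω) [IsProbabilityMeasure P]
    (n : ℕ) (hn : 2 ≤ n)
    (lam : EdgeKn n → Ω → ℝ) (hmeas : ∀ e, Measurable (lam e))
    (hindep : iIndepFun lam P)
    (hunif : ∀ e, Measure.map (lam e) P = (volume : Measure ℝ).restrict (Set.Icc 0 1))
    (δ : ℝ) (hδ0 : 0 ≤ δ) (hδ1 : δ ≤ 1) (k : ℕ) (hk2 : 2 ≤ k) (hkn : k ≤ n) :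
    ∫ ω, (cliqueCount (fun e => lam e ω) δ k : ℝ) ∂P
      = (n.choose k : ℝ) *
        ((k.choose 2 : ℝ) * δ ^ (k.choose 2 - 1) * (1 - δ) + δ ^ (k.choose 2)) :=
  stmt5_general P n lam hmeas hindep hunif δ hδ0 hδ1 k
end

section
/- Let n ≥ 2, let (K_n, λ) be a random simple temporal graph on n vertices, and let δ ∈ (0,1]. Let Q and Q' be two k-element vertex subsets of {1,…,n} with 2 ≤ k ≤ n whose intersection has exactly t elements, where 1 ≤ t ≤ k−1. Then P(both Q and Q' are δ-temporal cliques) ≤ ( C(k,2)·δ^{C(k,2)−1}·(1−δ) + δ^{C(k,2)} ) · C(k,2) · δ^{C(k,2)−C(t,2)−1}, where C(a,2) = a(a−1)/2. -/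
open MeasureTheory ProbabilityTheory

/-!
If both `Q` and `Q'` are `δ`-temporal cliques, let `e` and `f` be the edges of smallest label in
`Q` and in `Q'`. Then every edge of `Q` has its label in `[λ e, λ e + δ]`, and every edge of `Q'`
outside `Q ∪ {f}` has its label in `[λ f, λ f + δ]`. Conditionally on the labels of the edges of
`Q ∪ {f}`, the latter labels are independent and each falls into a fixed window of length `δ`,
which costs a factor `δ ^ (C(k,2) - C(t,2) - 1)`. As for `Q`, either `λ e ≤ 1 - δ`, which has
probability at most `(1 - δ) δ ^ (C(k,2) - 1)` for each of the `C(k,2)` choices of `e`, or all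
labels of `Q` exceed `1 - δ`, which has probability at most `δ ^ C(k,2)`. The union bound over `f`
gives the last factor `C(k,2)`.
-/

open Finset

section Windows

variable {ι : Type*}

def spreadLE (S : Finset ι) (δ : ℝ) : Set (ι → ℝ) := {x | ∀ i ∈ S, ∀ j ∈ S, |x i - x j| ≤ δ}

def windowAbove (T : Finset ι) (f : ι) (δ : ℝ) : Set (ι → ℝ) :=
  {x | ∀ g ∈ T, x g ∈ Set.Icc (x f) (x f + δ)}

lemma windowAbove_anti {T T' : Finset ι} (h : T ⊆ T') (f : ι) (δ : ℝ) :
    windowAbove T' f δ ⊆ windowAbove T f δ :=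
  fun _ hx g hg => hx g (h hg)

lemma measurableSet_windowAbove (T : Finset ι) (f : ι) (δ : ℝ) :
    MeasurableSet (windowAbove T f δ) := by
  simp only [windowAbove, Set.ofPred_forall]
  refine Finset.measurableSet_biInter T fun g _ => ?_
  change MeasurableSet ({x : ι → ℝ | x f ≤ x g} ∩ {x | x g ≤ x f + δ})
  exact (measurableSet_le (by fun_prop) (by fun_prop)).inter
    (measurableSet_le (by fun_prop) (by fun_prop))

lemma spreadLE_subset_iUnion_windowAbove {S : Finset ι} (hS : S.Nonempty) (δ : ℝ) :
    spreadLE S δ ⊆ ⋃ e ∈ S, windowAbove S e δ := by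
  intro x hx
  obtain ⟨e, he, hmin⟩ := S.exists_min_image x hS
  exact Set.mem_biUnion he fun g hg => ⟨hmin g hg, by linarith [(abs_le.mp (hx g hg e he)).2]⟩

lemma spreadLE_subset_iUnion_union {S : Finset ι} (hS : S.Nonempty) (δ c : ℝ) :
    spreadLE S δ ⊆
      (⋃ e ∈ S, {x | x e ≤ c} ∩ windowAbove S e δ) ∪ {x | ∀ g ∈ S, c < x g} := by
  intro x hx
  obtain ⟨e, he, hxe⟩ := Set.mem_iUnion₂.mp (spreadLE_subset_iUnion_windowAbove hS δ hx)
  by_cases hle : x e ≤ c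
  · exact .inl (Set.mem_biUnion he ⟨hle, hxe⟩)
  · exact .inr fun g hg => (not_le.mp hle).trans_le (hxe g hg).1

end Windows

section Independence

variable {Ω : Type*} [MeasurableSpace Ω] {P : Measure Ω}

theorem ProbabilityTheory.IndepFun.measure_preimage_inter_le_mul [IsFiniteMeasure P]
    {α β : Type*} [MeasurableSpace α] [MeasurableSpace β] {V : Ω → α} {Y : Ω → β}
    (hVY : IndepFun V Y P) (hV : Measurable V) (hY : Measurable Y) {A : Set α}
    (hA : MeasurableSet A)
    {D : Set (α × β)} (hD : MeasurableSet D) {r : ENNReal}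
    (hr : ∀ a ∈ A, P (Y ⁻¹' (Prod.mk a ⁻¹' D)) ≤ r) :
    P (V ⁻¹' A ∩ (fun ω => (V ω, Y ω)) ⁻¹' D) ≤ P (V ⁻¹' A) * r := by
  have hAD : MeasurableSet (Prod.fst ⁻¹' A ∩ D) := (measurable_fst hA).inter hD
  have hmap := (indepFun_iff_map_prod_eq_prod_map_map hV.aemeasurable hY.aemeasurable).mp hVY
  calc P (V ⁻¹' A ∩ (fun ω => (V ω, Y ω)) ⁻¹' D)
      = ((P.map V).prod (P.map Y)) (Prod.fst ⁻¹' A ∩ D) := by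
        rw [← hmap, Measure.map_apply (hV.prodMk hY) hAD]; rfl
    _ = ∫⁻ a, P.map Y (Prod.mk a ⁻¹' (Prod.fst ⁻¹' A ∩ D)) ∂P.map V := Measure.prod_apply hAD
    _ ≤ ∫⁻ a, A.indicator (fun _ => r) a ∂P.map V := lintegral_mono fun a => ?_
    _ = P (V ⁻¹' A) * r := by
        rw [lintegral_indicator_const hA, Measure.map_apply hV hA, mul_comm]
  by_cases ha : a ∈ A
  · have hslice : Prod.mk a ⁻¹' (Prod.fst ⁻¹' A ∩ D) = Prod.mk a ⁻¹' D := by ext; simp [ha]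
    simpa [hslice, ha, Measure.map_apply hY (measurable_prodMk_left hD)] using hr a ha
  · have hslice : Prod.mk a ⁻¹' (Prod.fst ⁻¹' A ∩ D) = ∅ := by ext; simp [ha]
    simp [hslice, ha]

variable {ι : Type*} {X : Ω → ι → ℝ}

lemma measure_preimage_forall_mem_le (hindep : iIndepFun (fun i ω => X ω i) P) (T : Finset ι)
    {B : ι → Set ℝ} (hB : ∀ g, MeasurableSet (B g)) {r : ENNReal}
    (hr : ∀ g ∈ T, P ((X · g) ⁻¹' B g) ≤ r) :
    P (X ⁻¹' {x | ∀ g ∈ T, x g ∈ B g}) ≤ r ^ #T := by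
  calc P (X ⁻¹' {x | ∀ g ∈ T, x g ∈ B g}) = P (⋂ g ∈ T, (X · g) ⁻¹' B g) := by
        congr 1; ext; simp
    _ = ∏ g ∈ T, P ((X · g) ⁻¹' B g) := hindep.meas_biInter fun g _ => ⟨B g, hB g, rfl⟩
    _ ≤ ∏ _g ∈ T, r := prod_le_prod' hr
    _ = r ^ #T := prod_const r

theorem measure_preimage_inter_windowAbove_le [IsFiniteMeasure P] {δ : ℝ} (hX : Measurable X)
    (hindep : iIndepFun (fun i ω => X ω i) P)
    (hwin : ∀ i a, P ((X · i) ⁻¹' Set.Icc a (a + δ)) ≤ ENNReal.ofReal δ)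
    {W T : Finset ι} (hWT : Disjoint W T) {f : ι} (hf : f ∈ W) {A : Set (ι → ℝ)}
    (hA : MeasurableSet A) (hAW : ∀ x ∈ A, ∀ y, (∀ i ∈ W, x i = y i) → y ∈ A) :
    P (X ⁻¹' (A ∩ windowAbove T f δ)) ≤ P (X ⁻¹' A) * ENNReal.ofReal δ ^ #T := by
  classical
  have hXi : ∀ i, Measurable (X · i) := measurable_pi_iff.mp hX
  let V : Ω → W → ℝ := fun ω i => X ω i
  let Y : Ω → T → ℝ := fun ω g => X ω g
  -- `A` only sees the coordinates in `W`, so it is read off `V` through this extension by zero.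
  let extend : (W → ℝ) → ι → ℝ := fun y i => if h : i ∈ W then y ⟨i, h⟩ else 0
  have hextend : Measurable extend := measurable_pi_lambda _ fun i => by
    by_cases h : i ∈ W <;> simp only [extend, h, dite_true, dite_false] <;> fun_prop
  have hXA : X ⁻¹' A = V ⁻¹' (extend ⁻¹' A) := by
    ext ω
    exact ⟨fun h => hAW _ h _ fun i hi => by simp [extend, hi, V],
      fun h => hAW _ h _ fun i hi => by simp [extend, hi, V]⟩
  let D : Set ((W → ℝ) × (T → ℝ)) :=
    {p | ∀ g, p.2 g ∈ Set.Icc (p.1 ⟨f, hf⟩) (p.1 ⟨f, hf⟩ + δ)}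
  have hD : MeasurableSet D := by
    simp only [D, Set.ofPred_forall]
    refine MeasurableSet.iInter fun g => ?_
    change MeasurableSet ({p : (W → ℝ) × (T → ℝ) | p.1 ⟨f, hf⟩ ≤ p.2 g} ∩
      {p | p.2 g ≤ p.1 ⟨f, hf⟩ + δ})
    exact (measurableSet_le (by fun_prop) (by fun_prop)).inter
      (measurableSet_le (by fun_prop) (by fun_prop))
  have hXwin : X ⁻¹' windowAbove T f δ = (fun ω => (V ω, Y ω)) ⁻¹' D := by
    ext ω
    exact ⟨fun h g => h g g.2, fun h g hg => h ⟨g, hg⟩⟩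
  rw [Set.preimage_inter, hXA, hXwin]
  refine (hindep.indepFun_finset W T hWT hXi).measure_preimage_inter_le_mul
    (measurable_pi_lambda _ fun i => hXi i) (measurable_pi_lambda _ fun g => hXi g)
    (hextend hA) hD fun a _ => ?_
  convert measure_preimage_forall_mem_le hindep T (fun _ => measurableSet_Icc)
    fun g _ => hwin g (a ⟨f, hf⟩) using 2
  ext ω
  exact ⟨fun h g hg => h ⟨g, hg⟩, fun h g => h g g.2⟩

variable (hX : Measurable X) (hindep : iIndepFun (fun i ω => X ω i) P)
  (hunif : ∀ i, P.map (X · i) = volume.restrict (Set.Icc 0 1))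
include hX hunif

lemma measure_coord_preimage_le (i : ι) {B : Set ℝ} (hB : MeasurableSet B) {a b : ℝ}
    (hBab : B ∩ Set.Icc 0 1 ⊆ Set.Icc a b) :
    P ((X · i) ⁻¹' B) ≤ ENNReal.ofReal (b - a) := by
  rw [← Measure.map_apply (measurable_pi_iff.mp hX i) hB, hunif, Measure.restrict_apply hB,
    ← Real.volume_Icc]
  exact measure_mono hBab

lemma measure_coord_mem_Icc_le (δ : ℝ) (i : ι) (a : ℝ) :
    P ((X · i) ⁻¹' Set.Icc a (a + δ)) ≤ ENNReal.ofReal δ := by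
  simpa using measure_coord_preimage_le hX hunif i measurableSet_Icc (a := a) (b := a + δ)
    Set.inter_subset_left

include hindep

lemma measure_le_one_sub_inter_windowAbove_le [IsFiniteMeasure P] {δ : ℝ} {S : Finset ι} {e : ι}
    (he : e ∈ S) :
    P (X ⁻¹' ({x | x e ≤ 1 - δ} ∩ windowAbove S e δ))
      ≤ ENNReal.ofReal (1 - δ) * ENNReal.ofReal δ ^ (#S - 1) := by
  classical
  calc P (X ⁻¹' ({x | x e ≤ 1 - δ} ∩ windowAbove S e δ))
      ≤ P (X ⁻¹' ({x | x e ≤ 1 - δ} ∩ windowAbove (S.erase e) e δ)) :=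
        measure_mono (Set.preimage_mono (Set.inter_subset_inter_right _
          (windowAbove_anti (erase_subset e S) e δ)))
    _ ≤ P (X ⁻¹' {x | x e ≤ 1 - δ}) * ENNReal.ofReal δ ^ #(S.erase e) :=
        measure_preimage_inter_windowAbove_le hX hindep (measure_coord_mem_Icc_le hX hunif δ)
          (disjoint_singleton_left.2 (notMem_erase e S)) (mem_singleton_self e)
          (measurableSet_le (measurable_pi_apply e) measurable_const)
          fun x hx y hxy => by rwa [Set.mem_ofPred_eq, ← hxy e (mem_singleton_self e)]
    _ ≤ ENNReal.ofReal (1 - δ) * ENNReal.ofReal δ ^ (#S - 1) := by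
        rw [card_erase_of_mem he]
        gcongr
        exact (measure_coord_preimage_le hX hunif e measurableSet_Iic (a := 0) (b := 1 - δ)
          fun x hx => ⟨hx.2.1, hx.1⟩).trans_eq (by rw [sub_zero])

lemma measure_forall_one_sub_lt_le {δ : ℝ} (S : Finset ι) :
    P (X ⁻¹' {x | ∀ g ∈ S, 1 - δ < x g}) ≤ ENNReal.ofReal δ ^ #S :=
  measure_preimage_forall_mem_le hindep S (fun _ => measurableSet_Ioi) fun g _ => by
    simpa using measure_coord_preimage_le hX hunif g measurableSet_Ioi (a := 1 - δ) (b := 1)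
      fun x hx => ⟨le_of_lt hx.1, hx.2.2⟩

lemma measure_spreadLE_inter_windowAbove_le [IsFiniteMeasure P] [DecidableEq ι] {δ : ℝ}
    {S T : Finset ι} (hS : S.Nonempty) {f : ι} (hT : Disjoint (insert f S) T) :
    P (X ⁻¹' (spreadLE S δ ∩ windowAbove T f δ))
      ≤ (#S * ENNReal.ofReal δ ^ (#S - 1) * ENNReal.ofReal (1 - δ) + ENNReal.ofReal δ ^ #S)
        * ENNReal.ofReal δ ^ #T := by
  have hwin := measure_coord_mem_Icc_le hX hunif δ
  have hlow : ∀ e ∈ S, P (X ⁻¹' (({x | x e ≤ 1 - δ} ∩ windowAbove S e δ) ∩ windowAbove T f δ))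
      ≤ ENNReal.ofReal (1 - δ) * ENNReal.ofReal δ ^ (#S - 1) * ENNReal.ofReal δ ^ #T := by
    intro e he
    refine (measure_preimage_inter_windowAbove_le hX hindep hwin hT (mem_insert_self f S)
      ((measurableSet_le (measurable_pi_apply e) measurable_const).inter
        (measurableSet_windowAbove S e δ)) fun x hx y hxy => ?_).trans
      (by gcongr; exact measure_le_one_sub_inter_windowAbove_le hX hindep hunif he)
    have hxyS : ∀ g ∈ S, x g = y g := fun g hg => hxy g (mem_insert_of_mem hg)
    refine ⟨show y e ≤ 1 - δ from hxyS e he ▸ hx.1, fun g hg => ?_⟩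
    rw [← hxyS g hg, ← hxyS e he]
    exact hx.2 g hg
  have hhigh : P (X ⁻¹' ({x | ∀ g ∈ S, 1 - δ < x g} ∩ windowAbove T f δ))
      ≤ ENNReal.ofReal δ ^ #S * ENNReal.ofReal δ ^ #T := by
    refine (measure_preimage_inter_windowAbove_le hX hindep hwin hT (mem_insert_self f S)
      (A := {x | ∀ g ∈ S, 1 - δ < x g}) ?_
      fun x hx y hxy g hg => hxy g (mem_insert_of_mem hg) ▸ hx g hg).trans
      (by gcongr; exact measure_forall_one_sub_lt_le hX hindep hunif S)
    simp only [Set.ofPred_forall]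
    exact Finset.measurableSet_biInter S fun g _ => measurableSet_lt (by fun_prop) (by fun_prop)
  calc P (X ⁻¹' (spreadLE S δ ∩ windowAbove T f δ))
      ≤ ∑ e ∈ S, P (X ⁻¹' (({x | x e ≤ 1 - δ} ∩ windowAbove S e δ) ∩ windowAbove T f δ))
        + P (X ⁻¹' ({x | ∀ g ∈ S, 1 - δ < x g} ∩ windowAbove T f δ)) := by
        refine (measure_mono (Set.preimage_mono
          (Set.inter_subset_inter_left _ (spreadLE_subset_iUnion_union hS δ (1 - δ))))).trans ?_
        rw [Set.union_inter_distrib_right, Set.iUnion₂_inter, Set.preimage_union,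
          Set.preimage_iUnion₂]
        exact (measure_union_le _ _).trans (add_le_add_left (measure_biUnion_finset_le _ _) _)
    _ ≤ ∑ _e ∈ S, ENNReal.ofReal (1 - δ) * ENNReal.ofReal δ ^ (#S - 1) * ENNReal.ofReal δ ^ #T
        + ENNReal.ofReal δ ^ #S * ENNReal.ofReal δ ^ #T := add_le_add (sum_le_sum hlow) hhigh
    _ = _ := by rw [sum_const, nsmul_eq_mul]; ring

theorem measure_spreadLE_inter_spreadLE_le [IsFiniteMeasure P] [DecidableEq ι] {δ : ℝ}
    (hδ1 : δ ≤ 1) {S S' : Finset ι} (hS : S.Nonempty) (hS' : S'.Nonempty) :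
    P (X ⁻¹' (spreadLE S δ ∩ spreadLE S' δ))
      ≤ (#S * ENNReal.ofReal δ ^ (#S - 1) * ENNReal.ofReal (1 - δ) + ENNReal.ofReal δ ^ #S)
        * #S' * ENNReal.ofReal δ ^ (#S' - #(S ∩ S') - 1) := by
  have hcover : spreadLE S δ ∩ spreadLE S' δ ⊆
      ⋃ f ∈ S', spreadLE S δ ∩ windowAbove (S' \ insert f S) f δ := by
    rintro x ⟨hx, hx'⟩
    obtain ⟨f, hf, hxf⟩ := Set.mem_iUnion₂.mp (spreadLE_subset_iUnion_windowAbove hS' δ hx')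
    exact Set.mem_biUnion hf ⟨hx, windowAbove_anti sdiff_subset f δ hxf⟩
  have hcard : ∀ f, #S' - #(S ∩ S') - 1 ≤ #(S' \ insert f S) := fun f => by
    rw [sdiff_insert, ← card_sdiff]
    exact pred_card_le_card_erase
  calc P (X ⁻¹' (spreadLE S δ ∩ spreadLE S' δ))
      ≤ ∑ f ∈ S', P (X ⁻¹' (spreadLE S δ ∩ windowAbove (S' \ insert f S) f δ)) := by
        refine (measure_mono (Set.preimage_mono hcover)).trans ?_
        rw [Set.preimage_iUnion₂]
        exact measure_biUnion_finset_le _ _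
    _ ≤ ∑ _f ∈ S', (#S * ENNReal.ofReal δ ^ (#S - 1) * ENNReal.ofReal (1 - δ)
          + ENNReal.ofReal δ ^ #S) * ENNReal.ofReal δ ^ (#S' - #(S ∩ S') - 1) := by
        gcongr with f
        refine (measure_spreadLE_inter_windowAbove_le hX hindep hunif hS disjoint_sdiff).trans ?_
        exact mul_le_mul' le_rfl
          (pow_le_pow_right_of_le_one' (ENNReal.ofReal_le_one.mpr hδ1) (hcard f))
    _ = _ := by rw [sum_const, nsmul_eq_mul]; ring

end Independence

instance (n : ℕ) : DecidableEq (EdgeKn n) :=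
  inferInstanceAs (DecidableEq {e : Sym2 (Fin n) // ¬ e.IsDiag})

def edgesIn {n : ℕ} (Q : Finset (Fin n)) : Finset (EdgeKn n) :=
  Q.sym2.subtype fun e : Sym2 (Fin n) => ¬ e.IsDiag

lemma mem_edgesIn {n : ℕ} {Q : Finset (Fin n)} {e : EdgeKn n} :
    e ∈ edgesIn Q ↔ ∀ v ∈ e.1, v ∈ Q :=
  mem_subtype.trans mem_sym2_iff

lemma card_edgesIn {n : ℕ} (Q : Finset (Fin n)) : #(edgesIn Q) = (#Q).choose 2 := by
  refine (card_subtype _ _).trans ?_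
  rw [sym2_eq_image, Sym2.filter_image_mk_not_isDiag, Sym2.card_image_offDiag]

lemma edgesIn_inter {n : ℕ} (Q Q' : Finset (Fin n)) :
    edgesIn (Q ∩ Q') = edgesIn Q ∩ edgesIn Q' := by
  ext e
  simp only [mem_inter, mem_edgesIn, forall_and]

lemma isTemporalClique_iff_mem_spreadLE {n : ℕ} {lam : EdgeKn n → ℝ} {δ : ℝ}
    {Q : Finset (Fin n)} : IsTemporalClique lam δ Q ↔ lam ∈ spreadLE (edgesIn Q) δ := by
  simp only [IsTemporalClique, spreadLE, Set.mem_ofPred_eq, mem_edgesIn]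
  exact ⟨fun h e he e' he' => h e e' he he', fun h e e' he he' => h e he e' he'⟩

theorem stmt10_general
    {Ω : Type*} [MeasurableSpace Ω] (P : Measure Ω) [IsProbabilityMeasure P]
    (n : ℕ)
    (lam : EdgeKn n → Ω → ℝ) (hmeas : ∀ e, Measurable (lam e))
    (hindep : iIndepFun lam P)
    (hunif : ∀ e, Measure.map (lam e) P = (volume : Measure ℝ).restrict (Set.Icc 0 1))
    (δ : ℝ) (hδ0 : 0 < δ) (hδ1 : δ ≤ 1)
    (k t : ℕ) (hk2 : 2 ≤ k)
    (Q Q' : Finset (Fin n)) (hQ : Q.card = k) (hQ' : Q'.card = k)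
    (hQQ' : (Q ∩ Q').card = t) :
    P {ω | IsTemporalClique (fun e => lam e ω) δ Q ∧ IsTemporalClique (fun e => lam e ω) δ Q'}
      ≤ ENNReal.ofReal
          (((k.choose 2 : ℝ) * δ ^ (k.choose 2 - 1) * (1 - δ) + δ ^ (k.choose 2)) *
            (k.choose 2 : ℝ) * δ ^ (k.choose 2 - t.choose 2 - 1)) := by
  have hne : ∀ {R : Finset (Fin n)}, #R = k → (edgesIn R).Nonempty := fun hR =>
    card_pos.mp (by rw [card_edgesIn, hR]; exact Nat.choose_pos hk2)
  have hbound := measure_spreadLE_inter_spreadLE_le (X := fun ω e => lam e ω)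
    (measurable_pi_lambda _ hmeas) hindep hunif hδ1 (hne hQ) (hne hQ')
  rw [← edgesIn_inter, card_edgesIn, card_edgesIn, card_edgesIn, hQ, hQ', hQQ'] at hbound
  convert hbound using 1
  · simp_rw [isTemporalClique_iff_mem_spreadLE]
    rfl
  · rw [ENNReal.ofReal_mul' (by positivity), ENNReal.ofReal_mul' (by positivity),
      ENNReal.ofReal_add (mul_nonneg (by positivity) (sub_nonneg.2 hδ1)) (by positivity),
      ENNReal.ofReal_mul' (sub_nonneg.2 hδ1), ENNReal.ofReal_mul' (by positivity),
      ENNReal.ofReal_natCast, ENNReal.ofReal_pow hδ0.le, ENNReal.ofReal_pow hδ0.le,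
      ENNReal.ofReal_pow hδ0.le]

/-- In the random simple temporal graph `(K_n, λ)` with `δ ∈ (0,1]`,
if `Q` and `Q'` are `k`-element vertex subsets (`2 ≤ k ≤ n`) intersecting in exactly `t`
elements (`1 ≤ t ≤ k-1`), then the probability that both are `δ`-temporal cliques is at most
`(C(k,2) δ^(C(k,2)-1) (1-δ) + δ^(C(k,2))) · C(k,2) · δ^(C(k,2)-C(t,2)-1)`. -/
theorem stmt10
    {Ω : Type*} [MeasurableSpace Ω] (P : Measure Ω) [IsProbabilityMeasure P]
    (n : ℕ) (hn : 2 ≤ n)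
    (lam : EdgeKn n → Ω → ℝ) (hmeas : ∀ e, Measurable (lam e))
    (hindep : iIndepFun lam P)
    (hunif : ∀ e, Measure.map (lam e) P = (volume : Measure ℝ).restrict (Set.Icc 0 1))
    (δ : ℝ) (hδ0 : 0 < δ) (hδ1 : δ ≤ 1)
    (k t : ℕ) (hk2 : 2 ≤ k) (hkn : k ≤ n) (ht1 : 1 ≤ t) (htk : t ≤ k - 1)
    (Q Q' : Finset (Fin n)) (hQ : Q.card = k) (hQ' : Q'.card = k)
    (hQQ' : (Q ∩ Q').card = t) :
    P {ω | IsTemporalClique (fun e => lam e ω) δ Q ∧ IsTemporalClique (fun e => lam e ω) δ Q'}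
      ≤ ENNReal.ofReal
          (((k.choose 2 : ℝ) * δ ^ (k.choose 2 - 1) * (1 - δ) + δ ^ (k.choose 2)) *
            (k.choose 2 : ℝ) * δ ^ (k.choose 2 - t.choose 2 - 1)) :=
  stmt10_general P n lam hmeas hindep hunif δ hδ0 hδ1 k t hk2 Q Q' hQ hQ' hQQ'
end

section
/- Let δ ∈ (0,1) and ε > 0 be constants, and for each n ≥ 2 let (K_n, λ) be a random simple temporal graph on n vertices. Let k_0(n) = 2 ln n / ln(1/δ). Then the probability that (K_n, λ) contains a δ-temporal clique of size at least ⌈(1+ε)·k_0(n)⌉ tends to 0 as n → ∞. -/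
open MeasureTheory ProbabilityTheory

/-! First moment method. The `k.choose 2` labels inside a `δ`-temporal clique `Q` of size `k`
lie in an interval of length `δ`, hence in one of `O(1)` fixed windows of a slightly larger
length `ρ = δ^θ`; by independence this has probability `O(ρ^(k.choose 2))`. A union bound over
the `n.choose k ≤ n^k` sets `Q` gives `O(exp (k (log n - (k - 1)/2 · log (1/ρ))))`, which
tends to `0` once `k ≥ (1 + ε) k₀(n)` and `θ > 1/(1 + ε)`. -/

open Filter Topology
open scoped ENNReal

instance inst_s14 (n : ℕ) : Fintype (EdgeKn n) :=
  inferInstanceAs (Fintype {e : Sym2 (Fin n) // ¬ e.IsDiag})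

namespace EdgeKn

variable {n : ℕ}

def within (Q : Finset (Fin n)) : Finset (EdgeKn n) :=
  (Q.sym2.subtype fun e => ¬ e.IsDiag : Finset {e : Sym2 (Fin n) // ¬ e.IsDiag})

theorem mem_within {Q : Finset (Fin n)} {e : EdgeKn n} : e ∈ within Q ↔ ∀ v ∈ e.1, v ∈ Q :=
  Finset.mem_subtype.trans Finset.mem_sym2_iff

theorem card_within (Q : Finset (Fin n)) : (within Q).card = Q.card.choose 2 :=
  (Finset.card_subtype _ _).trans <| by
    rw [Finset.sym2_eq_image, Sym2.filter_image_mk_not_isDiag,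
      Sym2.card_image_offDiag]

end EdgeKn

theorem IsTemporalClique.mono {n : ℕ} {lam : EdgeKn n → ℝ} {δ : ℝ} {Q Q' : Finset (Fin n)}
    (hQ : IsTemporalClique lam δ Q) (hQ' : Q' ⊆ Q) : IsTemporalClique lam δ Q' :=
  fun e e' he he' => hQ e e' (fun v hv => hQ' (he v hv)) (fun v hv => hQ' (he' v hv))

theorem exists_mem_range_window {x s : ℝ} (hx : x ∈ Set.Icc (0 : ℝ) 1) (hs : 0 < s) :
    ∃ j ∈ Finset.range (⌈1 / s⌉₊ + 1), (j : ℝ) * s ≤ x ∧ x ≤ j * s + s := by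
  refine ⟨⌊x / s⌋₊, ?_, ?_, ?_⟩
  · rw [Finset.mem_range, Nat.lt_succ_iff]
    exact (Nat.floor_le_floor (div_le_div_of_nonneg_right hx.2 hs.le)).trans
      (Nat.floor_le_ceil _)
  · rw [← le_div_iff₀ hs]
    exact Nat.floor_le (div_nonneg hx.1 hs.le)
  · have := Nat.lt_floor_add_one (x / s)
    rw [div_lt_iff₀ hs] at this
    linarith

theorem exists_window_of_abs_sub_le {ι : Type*} {f : ι → ℝ} {S : Finset ι} {δ ρ : ℝ}
    (h01 : ∀ i ∈ S, f i ∈ Set.Icc (0 : ℝ) 1) (hδ : ∀ i ∈ S, ∀ i' ∈ S, |f i - f i'| ≤ δ)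
    (hδρ : δ < ρ) :
    ∃ j ∈ Finset.range (⌈1 / (ρ - δ)⌉₊ + 1),
      ∀ i ∈ S, f i ∈ Set.Icc ((j : ℝ) * (ρ - δ)) (j * (ρ - δ) + ρ) := by
  rcases S.eq_empty_or_nonempty with rfl | hS
  · exact ⟨0, by simp, by simp⟩
  obtain ⟨i₀, hi₀, hmin⟩ := S.exists_min_image f hS
  obtain ⟨j, hj, hjlow, hjup⟩ := exists_mem_range_window (h01 i₀ hi₀) (sub_pos.mpr hδρ)
  refine ⟨j, hj, fun i hi => ⟨hjlow.trans (hmin i hi), ?_⟩⟩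
  have := (abs_le.mp (hδ i hi i₀ hi₀)).2
  linarith

theorem measure_biInter_preimage_Icc_le {ι Ω : Type*} [MeasurableSpace Ω] {P : Measure Ω}
    {lam : ι → Ω → ℝ} (hmeas : ∀ i, Measurable (lam i)) (hindep : iIndepFun lam P)
    (hunif : ∀ i, Measure.map (lam i) P = (volume : Measure ℝ).restrict (Set.Icc 0 1))
    (S : Finset ι) (a ρ : ℝ) :
    P (⋂ i ∈ S, lam i ⁻¹' Set.Icc a (a + ρ)) ≤ ENNReal.ofReal ρ ^ S.card := by
  rw [hindep.meas_biInter fun i _ => ⟨_, measurableSet_Icc, rfl⟩, ← Finset.prod_const]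
  refine Finset.prod_le_prod' fun i _ => ?_
  rw [← Measure.map_apply (hmeas i) measurableSet_Icc, hunif i,
    Measure.restrict_apply measurableSet_Icc]
  calc volume (Set.Icc a (a + ρ) ∩ Set.Icc 0 1) ≤ volume (Set.Icc a (a + ρ)) :=
        measure_mono Set.inter_subset_left
    _ = ENNReal.ofReal ρ := by rw [Real.volume_Icc, add_sub_cancel_left]

theorem ae_mem_Icc_of_map_eq {Ω : Type*} [MeasurableSpace Ω] {P : Measure Ω} {X : Ω → ℝ}
    (hX : Measurable X) (hunif : Measure.map X P = (volume : Measure ℝ).restrict (Set.Icc 0 1)) :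
    ∀ᵐ ω ∂P, X ω ∈ Set.Icc (0 : ℝ) 1 :=
  ae_of_ae_map hX.aemeasurable (hunif ▸ ae_restrict_mem measurableSet_Icc)

theorem measure_exists_temporalClique_le {n : ℕ} {Ω : Type*} [MeasurableSpace Ω]
    {P : Measure Ω} {lam : EdgeKn n → Ω → ℝ} (hmeas : ∀ e, Measurable (lam e))
    (hindep : iIndepFun lam P)
    (hunif : ∀ e, Measure.map (lam e) P = (volume : Measure ℝ).restrict (Set.Icc 0 1))
    {δ ρ : ℝ} (hδρ : δ < ρ) (k : ℕ) :
    P {ω | ∃ Q : Finset (Fin n), k ≤ Q.card ∧ IsTemporalClique (fun e => lam e ω) δ Q} ≤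
      n.choose k * (⌈1 / (ρ - δ)⌉₊ + 1) * ENNReal.ofReal ρ ^ k.choose 2 := by
  have h01 : ∀ᵐ ω ∂P, ∀ e, lam e ω ∈ Set.Icc (0 : ℝ) 1 :=
    ae_all_iff.mpr fun e => ae_mem_Icc_of_map_eq (hmeas e) (hunif e)
  have hcover : {ω | ∃ Q : Finset (Fin n), k ≤ Q.card ∧
      IsTemporalClique (fun e => lam e ω) δ Q} ≤ᵐ[P]
      ⋃ Q ∈ Finset.univ.powersetCard k, ⋃ j ∈ Finset.range (⌈1 / (ρ - δ)⌉₊ + 1),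
        ⋂ e ∈ EdgeKn.within Q, lam e ⁻¹' Set.Icc (j * (ρ - δ)) (j * (ρ - δ) + ρ) := by
    filter_upwards [h01] with ω hω ⟨Q, hkQ, hQ⟩
    obtain ⟨Q', hQ'Q, hQ'k⟩ := Finset.exists_subset_card_eq hkQ
    obtain ⟨j, hj, hwin⟩ := exists_window_of_abs_sub_le (f := fun e => lam e ω)
      (S := EdgeKn.within Q') (fun e _ => hω e)
      (fun e he e' he' => hQ.mono hQ'Q e e' (EdgeKn.mem_within.mp he) (EdgeKn.mem_within.mp he'))
      hδρ
    exact Set.mem_iUnion₂.mpr ⟨Q', Finset.mem_powersetCard_univ.mpr hQ'k,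
      Set.mem_iUnion₂.mpr ⟨j, hj, Set.mem_iInter₂.mpr hwin⟩⟩
  calc _ ≤ _ := measure_mono_ae hcover
    _ ≤ ∑ Q ∈ Finset.univ.powersetCard k, ∑ j ∈ Finset.range (⌈1 / (ρ - δ)⌉₊ + 1),
          P (⋂ e ∈ EdgeKn.within Q, lam e ⁻¹' Set.Icc (j * (ρ - δ)) (j * (ρ - δ) + ρ)) :=
        (measure_biUnion_finset_le _ _).trans
          (Finset.sum_le_sum fun _ _ => measure_biUnion_finset_le _ _)
    _ ≤ ∑ Q ∈ Finset.univ.powersetCard k, ∑ _j ∈ Finset.range (⌈1 / (ρ - δ)⌉₊ + 1),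
          ENNReal.ofReal ρ ^ k.choose 2 := by
        refine Finset.sum_le_sum fun Q hQ => Finset.sum_le_sum fun j _ => ?_
        rw [← Finset.mem_powersetCard_univ.mp hQ, ← EdgeKn.card_within]
        exact measure_biInter_preimage_Icc_le hmeas hindep hunif _ _ _
    _ = _ := by
        simp [Finset.sum_const, Finset.card_powersetCard, mul_assoc]

theorem tendsto_pow_mul_pow_choose_two {k : ℕ → ℕ} {α ρ : ℝ} (hρ0 : 0 < ρ) (hρ1 : ρ < 1)
    (hα : 2 < α * Real.log (1 / ρ)) (hk : ∀ n : ℕ, α * Real.log n ≤ k n) :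
    Tendsto (fun n : ℕ => (n : ℝ) ^ k n * ρ ^ (k n).choose 2) atTop (𝓝 0) := by
  set A := Real.log (1 / ρ) with hA_def
  set η := α * A / 2 - 1 with hη_def
  have hη : 0 < η := by linarith
  have hA : 0 < A := Real.log_pos (one_lt_one_div hρ0 hρ1)
  have hα0 : 0 < α := by nlinarith
  have hρA : Real.exp (-A) = ρ := by
    rw [hA_def, one_div, Real.log_inv, neg_neg, Real.exp_log hρ0]
  have hdecay : Tendsto (fun n : ℕ => (n : ℝ) ^ (-(η / 2))) atTop (𝓝 0) :=
    (tendsto_rpow_neg_atTop (by positivity)).comp tendsto_natCast_atTop_atTop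
  refine tendsto_of_tendsto_of_tendsto_of_le_of_le' tendsto_const_nhds hdecay
    (Eventually.of_forall fun n => by positivity) ?_
  filter_upwards [(Real.tendsto_log_atTop.comp tendsto_natCast_atTop_atTop).eventually_ge_atTop
    (A / η), eventually_gt_atTop 0] with n (hc : A / η ≤ Real.log n) hn
  set c := Real.log n
  have hn0 : (0 : ℝ) < n := Nat.cast_pos.mpr hn
  have hηc : A ≤ η * c := (div_le_iff₀' hη).mp hc
  have hk1 : (1 : ℝ) ≤ k n :=
    Nat.one_le_cast.mpr (Nat.cast_pos.mp (lt_of_lt_of_le (by nlinarith) (hk n)))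
  have hX : c - (k n - 1) / 2 * A ≤ -(η / 2) * c := by
    nlinarith [mul_le_mul_of_nonneg_right (hk n) hA.le]
  have hkey : k n * c - ((k n).choose 2 : ℕ) * A ≤ c * -(η / 2) := by
    rw [Nat.cast_choose_two]
    nlinarith [mul_le_mul_of_nonpos_right hk1 (hX.trans (by nlinarith))]
  calc (n : ℝ) ^ k n * ρ ^ (k n).choose 2
      = Real.exp c ^ k n * Real.exp (-A) ^ (k n).choose 2 := by rw [Real.exp_log hn0, hρA]
    _ = Real.exp (k n * c - ((k n).choose 2 : ℕ) * A) := by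
        rw [← Real.exp_nat_mul, ← Real.exp_nat_mul, ← Real.exp_add]
        ring_nf
    _ ≤ Real.exp (c * -(η / 2)) := Real.exp_le_exp.mpr hkey
    _ = (n : ℝ) ^ (-(η / 2)) := (Real.rpow_def_of_pos hn0 _).symm

theorem exists_between_log_one_div_lt {δ ε : ℝ} (hδ0 : 0 < δ) (hδ1 : δ < 1) (hε : 0 < ε) :
    ∃ ρ, δ < ρ ∧ ρ < 1 ∧ Real.log (1 / δ) < (1 + ε) * Real.log (1 / ρ) := by
  -- `ρ = δ ^ θ` for any `θ ∈ (1/(1+ε), 1)`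
  have hθ1 : (2 + ε) / (2 + 2 * ε) < 1 := (div_lt_one (by positivity)).mpr (by linarith)
  refine ⟨δ ^ ((2 + ε) / (2 + 2 * ε)),
    by simpa using Real.rpow_lt_rpow_of_exponent_gt hδ0 hδ1 hθ1,
    Real.rpow_lt_one hδ0.le hδ1 (by positivity), ?_⟩
  have hθ : (1 + ε) * ((2 + ε) / (2 + 2 * ε)) = 1 + ε / 2 := by field_simp
  simp only [one_div, Real.log_inv, Real.log_rpow hδ0]
  rw [mul_neg, ← mul_assoc, hθ]
  nlinarith [Real.log_neg hδ0 hδ1]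

theorem stmt14_general
    (δ : ℝ) (hδ0 : 0 < δ) (hδ1 : δ < 1) (ε : ℝ) (hε : 0 < ε)
    {Ω : ℕ → Type*} [∀ n, MeasurableSpace (Ω n)]
    (P : ∀ n, Measure (Ω n))
    (lam : ∀ n, EdgeKn n → Ω n → ℝ) (hmeas : ∀ n e, Measurable (lam n e))
    (hindep : ∀ n, iIndepFun (lam n) (P n))
    (hunif : ∀ n e, Measure.map (lam n e) (P n) = (volume : Measure ℝ).restrict (Set.Icc 0 1)) :
    Tendsto
      (fun n =>
        P n {ω | ∃ Q : Finset (Fin n),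
          ⌈(1 + ε) * (2 * Real.log n / Real.log (1/δ))⌉₊ ≤ Q.card ∧
          IsTemporalClique (fun e => lam n e ω) δ Q})
      atTop (nhds 0) := by
  set L := Real.log (1 / δ)
  set k : ℕ → ℕ := fun n => ⌈(1 + ε) * (2 * Real.log n / L)⌉₊
  have hL : 0 < L := Real.log_pos (one_lt_one_div hδ0 hδ1)
  obtain ⟨ρ, hδρ, hρ1, hρ⟩ := exists_between_log_one_div_lt hδ0 hδ1 hε
  have hdecay := tendsto_pow_mul_pow_choose_two (k := k) (α := 2 * (1 + ε) / L)
    (hδ0.trans hδρ) hρ1 (by rw [div_mul_eq_mul_div, lt_div_iff₀ hL]; linarith)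
    (fun n => le_of_eq_of_le (by ring) (Nat.le_ceil _))
  set N : ℕ := ⌈1 / (ρ - δ)⌉₊ + 1
  have hbound := ENNReal.tendsto_ofReal (hdecay.const_mul (N : ℝ))
  rw [mul_zero, ENNReal.ofReal_zero] at hbound
  refine tendsto_of_tendsto_of_tendsto_of_le_of_le tendsto_const_nhds hbound
    (fun _ => bot_le) fun n => ?_
  refine (measure_exists_temporalClique_le (hmeas n) (hindep n) (hunif n) hδρ (k n)).trans ?_
  calc _ = (N : ℝ≥0∞) * n.choose (k n) * ENNReal.ofReal ρ ^ (k n).choose 2 := by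
        push_cast [N]
        ring
    _ ≤ N * n ^ k n * ENNReal.ofReal ρ ^ (k n).choose 2 := by
        gcongr
        exact_mod_cast Nat.choose_le_pow n (k n)
    _ = _ := by
        rw [ENNReal.ofReal_mul (by positivity), ENNReal.ofReal_mul (by positivity),
          ENNReal.ofReal_pow (hδ0.trans hδρ).le, ENNReal.ofReal_pow (by positivity),
          ENNReal.ofReal_natCast, ENNReal.ofReal_natCast, mul_assoc]

open Filter in
/-- For constants `δ ∈ (0,1)` and `ε > 0`, with `k₀(n) = 2 ln n / ln(1/δ)`,
the probability that `(K_n, λ)` contains a `δ`-temporal clique of size at least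
`⌈(1+ε) k₀(n)⌉` tends to `0` as `n → ∞`. -/
theorem stmt14
    (δ : ℝ) (hδ0 : 0 < δ) (hδ1 : δ < 1) (ε : ℝ) (hε : 0 < ε)
    {Ω : ℕ → Type*} [∀ n, MeasurableSpace (Ω n)]
    (P : ∀ n, Measure (Ω n)) (hP : ∀ n, IsProbabilityMeasure (P n))
    (lam : ∀ n, EdgeKn n → Ω n → ℝ) (hmeas : ∀ n e, Measurable (lam n e))
    (hindep : ∀ n, iIndepFun (lam n) (P n))
    (hunif : ∀ n e, Measure.map (lam n e) (P n) = (volume : Measure ℝ).restrict (Set.Icc 0 1)) :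
    Tendsto
      (fun n =>
        P n {ω | ∃ Q : Finset (Fin n),
          ⌈(1 + ε) * (2 * Real.log n / Real.log (1/δ))⌉₊ ≤ Q.card ∧
          IsTemporalClique (fun e => lam n e ω) δ Q})
      atTop (nhds 0) :=
  stmt14_general δ hδ0 hδ1 ε hε P lam hmeas hindep hunif
end

section
/- Let δ ∈ (0,1) and ε ∈ (0,1) be constants, and for each n ≥ 2 let (K_n, λ) be a random simple temporal graph on n vertices. Let k_0(n) = 2 ln n / ln(1/δ). Then the probability that (K_n, λ) contains a δ-temporal clique of size ⌊(1−ε)·k_0(n)⌋ tends to 1 as n → ∞. -/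
open MeasureTheory ProbabilityTheory

/-!
Second moment method. For a `k`-set `Q` let `A_Q` be the event that every edge inside `Q` has
its label in `[0, δ]`; this forces `Q` to be a `δ`-temporal clique, and by independence
`P(A_Q) = δ ^ C` with `C = k.choose 2`, while two `k`-sets sharing `i` vertices give
`P(A_Q ∩ A_R) = δ ^ (2C - i.choose 2)`. Cauchy–Schwarz applied to the number `N` of sets `Q`
with `A_Q` gives `P(N > 0) ≥ E[N]² / E[N²] ≥ 1 / (1 + r)`, where `r` is the relative weight
of the pairs with `i ≥ 2`. For `k ≤ (1 - ε) k₀(n)` one has `δ ^ (-k) ≤ n ^ (2(1 - ε))`, so,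
relative to `n.choose k`, the overlap-`i` term is at most `x ^ i` with
`x = k² n ^ (1 - ε) / (n - k) → 0`, and `r ≤ k x² = O(log⁵ n / n ^ (2ε)) → 0`.
-/

open Finset
open scoped ENNReal

section Combinatorics

theorem Nat.choose_sub_mul_pow_le_choose_mul_pow {n k i : ℕ} (hi : i ≤ k) :
    n.choose (k - i) * (n - k) ^ i ≤ n.choose k * k ^ i := by
  induction i with
  | zero => simp
  | succ i ih =>
    have step : n.choose (k - (i + 1)) * (n - k) ≤ n.choose (k - i) * k := by
      obtain ⟨j, hj⟩ : ∃ j, k - i = j + 1 := ⟨k - i - 1, by omega⟩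
      rw [show k - (i + 1) = j by omega, hj]
      calc n.choose j * (n - k) ≤ n.choose j * (n - j) := by gcongr; omega
        _ = n.choose (j + 1) * (j + 1) := (Nat.choose_succ_right_eq n j).symm
        _ ≤ n.choose (j + 1) * k := by gcongr; omega
    calc n.choose (k - (i + 1)) * (n - k) ^ (i + 1)
        = n.choose (k - (i + 1)) * (n - k) * (n - k) ^ i := by ring
      _ ≤ n.choose (k - i) * k * (n - k) ^ i := by gcongr
      _ = k * (n.choose (k - i) * (n - k) ^ i) := by ring
      _ ≤ k * (n.choose k * k ^ i) := Nat.mul_le_mul_left _ (ih (by omega))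
      _ = n.choose k * k ^ (i + 1) := by ring

theorem Finset.card_powersetCard_filter_card_inter_le {α : Type*} [Fintype α] [DecidableEq α]
    (Q : Finset α) (k i : ℕ) :
    #{R ∈ (univ : Finset α).powersetCard k | #(Q ∩ R) = i}
      ≤ (#Q).choose i * (Fintype.card α - #Q).choose (k - i) := by
  rw [← card_compl, ← card_powersetCard, ← card_powersetCard, ← card_product]
  refine card_le_card_of_injOn (fun R => (Q ∩ R, R \ Q)) (fun R hR => ?_) (fun R _ R' _ h => ?_)
  · simp only [coe_filter, mem_powersetCard_univ, Set.mem_ofPred_eq] at hR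
    simp only [coe_product, Set.mem_prod, mem_coe, mem_powersetCard, inter_subset_left,
      true_and]
    refine ⟨hR.2, fun x hx => by simp [(mem_sdiff.1 hx).2], ?_⟩
    have := card_inter_add_card_sdiff R Q
    rw [inter_comm] at this
    omega
  · simp only [Prod.mk.injEq] at h
    rw [← sdiff_union_inter R Q, ← sdiff_union_inter R' Q, inter_comm R, inter_comm R', h.1, h.2]

end Combinatorics

namespace EdgeKn

instance (n : ℕ) : DecidableEq (EdgeKn n) := by unfold EdgeKn; infer_instance
instance (n : ℕ) : Fintype (EdgeKn n) := by unfold EdgeKn; infer_instance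

variable {n : ℕ}

def edgesWithin (Q : Finset (Fin n)) : Finset (EdgeKn n) :=
  {e | e.1 ∈ Q.sym2}

theorem mem_edgesWithin {Q : Finset (Fin n)} {e : EdgeKn n} :
    e ∈ edgesWithin Q ↔ ∀ v ∈ e.1, v ∈ Q := by
  simp [edgesWithin, mem_sym2_iff]

theorem edgesWithin_inter (Q R : Finset (Fin n)) :
    edgesWithin Q ∩ edgesWithin R = edgesWithin (Q ∩ R) := by
  ext e
  simp only [mem_inter, mem_edgesWithin]
  exact ⟨fun h v hv => ⟨h.1 v hv, h.2 v hv⟩,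
    fun h => ⟨fun v hv => (h v hv).1, fun v hv => (h v hv).2⟩⟩

theorem card_edgesWithin (Q : Finset (Fin n)) : #(edgesWithin Q) = (#Q).choose 2 := by
  rw [← Sym2.card_image_offDiag, ← Sym2.filter_image_mk_not_isDiag, ← sym2_eq_image]
  refine card_bij (fun e _ => e.1) (fun e he => ?_) (fun _ _ _ _ => Subtype.ext)
    (fun z hz => ?_)
  · exact mem_filter.2 ⟨mem_sym2_iff.2 (mem_edgesWithin.1 he), e.2⟩
  · rw [mem_filter, mem_sym2_iff] at hz
    exact ⟨⟨z, hz.2⟩, mem_edgesWithin.2 hz.1, rfl⟩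

end EdgeKn

section SecondMoment

variable {ι Ω : Type*} [MeasurableSpace Ω] (μ : Measure Ω) (s : Finset ι) {A : ι → Set Ω}

theorem MeasureTheory.sq_sum_measure_le_sum_measure_inter_mul_measure_biUnion
    (hA : ∀ i ∈ s, MeasurableSet (A i)) :
    (∑ i ∈ s, μ (A i)) ^ 2 ≤ (∑ i ∈ s, ∑ j ∈ s, μ (A i ∩ A j)) * μ (⋃ i ∈ s, A i) := by
  set N : Ω → ℝ≥0∞ := fun ω => ∑ i ∈ s, (A i).indicator 1 ω
  set U := ⋃ i ∈ s, A i
  have hU : MeasurableSet U := s.measurableSet_biUnion hA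
  have hN : Measurable N :=
    Finset.measurable_sum _ fun i hi => measurable_one.indicator (hA i hi)
  have hN1 : ∫⁻ ω, N ω ∂μ = ∑ i ∈ s, μ (A i) := by
    rw [lintegral_finsetSum' _ fun i hi => (measurable_one.indicator (hA i hi)).aemeasurable]
    exact Finset.sum_congr rfl fun i hi => lintegral_indicator_one (hA i hi)
  have hN2 : ∫⁻ ω, N ω ^ 2 ∂μ = ∑ i ∈ s, ∑ j ∈ s, μ (A i ∩ A j) := by
    have hmeas : ∀ i ∈ s, ∀ j ∈ s, MeasurableSet (A i ∩ A j) :=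
      fun i hi j hj => (hA i hi).inter (hA j hj)
    have hsq : ∀ ω, N ω ^ 2 = ∑ i ∈ s, ∑ j ∈ s, (A i ∩ A j).indicator 1 ω := fun ω => by
      simp only [N, sq, Finset.sum_mul_sum, Set.inter_indicator_one, Pi.mul_apply]
    rw [lintegral_congr hsq, lintegral_finsetSum' _ fun i hi => (Finset.measurable_sum _
      fun j hj => measurable_one.indicator (hmeas i hi j hj)).aemeasurable]
    refine Finset.sum_congr rfl fun i hi => ?_
    rw [lintegral_finsetSum' _ fun j hj =>
      (measurable_one.indicator (hmeas i hi j hj)).aemeasurable]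
    exact Finset.sum_congr rfl fun j hj => lintegral_indicator_one (hmeas i hi j hj)
  have hNU : (N * U.indicator 1) = N := by
    ext ω
    by_cases hω : ω ∈ U
    · simp [hω]
    · have : ∀ i ∈ s, ω ∉ A i := fun i hi h => hω (Set.mem_biUnion hi h)
      simp [N, hω, Finset.sum_eq_zero fun i hi => Set.indicator_of_notMem (this i hi) _]
  have hCS := ENNReal.lintegral_mul_le_Lp_mul_Lq μ Real.HolderConjugate.two_two hN.aemeasurable
    (measurable_one.indicator hU).aemeasurable
  have hU2 : ∀ ω, U.indicator (1 : Ω → ℝ≥0∞) ω ^ (2 : ℝ) = U.indicator 1 ω := fun ω => by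
    by_cases hω : ω ∈ U <;> simp [hω]
  simp only [hNU, ENNReal.rpow_two, hU2, lintegral_indicator_one hU, hN1, hN2] at hCS
  calc (∑ i ∈ s, μ (A i)) ^ 2
      ≤ (((∑ i ∈ s, ∑ j ∈ s, μ (A i ∩ A j)) ^ (1 / 2 : ℝ)) * μ U ^ (1 / 2 : ℝ)) ^ 2 := by
        gcongr
    _ = (∑ i ∈ s, ∑ j ∈ s, μ (A i ∩ A j)) * μ U := by
        rw [mul_pow, ← ENNReal.rpow_natCast, ← ENNReal.rpow_natCast, ← ENNReal.rpow_mul,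
          ← ENNReal.rpow_mul]
        norm_num

theorem MeasureTheory.inv_one_add_le_measure_biUnion (hA : ∀ i ∈ s, MeasurableSet (A i))
    {r : ℝ≥0∞} (h0 : ∑ i ∈ s, μ (A i) ≠ 0) (htop : ∑ i ∈ s, μ (A i) ≠ ∞)
    (hpairs : ∑ i ∈ s, ∑ j ∈ s, μ (A i ∩ A j) ≤ (1 + r) * (∑ i ∈ s, μ (A i)) ^ 2) :
    (1 + r)⁻¹ ≤ μ (⋃ i ∈ s, A i) := by
  have hsq0 : (∑ i ∈ s, μ (A i)) ^ 2 ≠ 0 := pow_ne_zero 2 h0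
  have hsqtop : (∑ i ∈ s, μ (A i)) ^ 2 ≠ ∞ := ENNReal.pow_ne_top htop
  have key : (∑ i ∈ s, μ (A i)) ^ 2 * 1 ≤ (∑ i ∈ s, μ (A i)) ^ 2 * ((1 + r) * μ (⋃ i ∈ s, A i)) :=
    calc (∑ i ∈ s, μ (A i)) ^ 2 * 1
        ≤ (∑ i ∈ s, ∑ j ∈ s, μ (A i ∩ A j)) * μ (⋃ i ∈ s, A i) := by
          rw [mul_one]; exact sq_sum_measure_le_sum_measure_inter_mul_measure_biUnion μ s hA
      _ ≤ (1 + r) * (∑ i ∈ s, μ (A i)) ^ 2 * μ (⋃ i ∈ s, A i) := by gcongr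
      _ = _ := by ring
  have hone := (ENNReal.mul_le_mul_iff_right hsq0 hsqtop).1 key
  calc (1 + r)⁻¹ ≤ (1 + r)⁻¹ * ((1 + r) * μ (⋃ i ∈ s, A i)) := le_mul_of_one_le_right' hone
    _ ≤ μ (⋃ i ∈ s, A i) := by
      rw [← mul_assoc]; exact mul_le_of_le_one_left' (ENNReal.inv_mul_le_one _)

end SecondMoment

section OverlapCount

theorem Finset.sum_powersetCard_le_of_card_inter {α : Type*} [Fintype α] [DecidableEq α]
    {Q : Finset α} {k : ℕ} (hQ : #Q = k) (g : ℕ → ℝ≥0∞) {b : ℝ≥0∞} (hb : ∀ i < 2, g i ≤ b) :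
    ∑ R ∈ (univ : Finset α).powersetCard k, g #(Q ∩ R)
      ≤ (Fintype.card α).choose k * b
        + ∑ i ∈ Icc 2 k, ((k.choose i * (Fintype.card α - k).choose (k - i) : ℕ) : ℝ≥0∞) * g i := by
  set 𝒬 := (univ : Finset α).powersetCard k
  rw [← sum_filter_add_sum_filter_not 𝒬 (fun R => #(Q ∩ R) < 2)]
  gcongr
  · calc ∑ R ∈ 𝒬 with #(Q ∩ R) < 2, g #(Q ∩ R)
        ≤ ∑ R ∈ 𝒬 with #(Q ∩ R) < 2, b := sum_le_sum fun R hR => hb _ (mem_filter.1 hR).2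
      _ ≤ ∑ R ∈ 𝒬, b := sum_le_sum_of_subset (filter_subset _ _)
      _ = (Fintype.card α).choose k * b := by
        rw [sum_const, nsmul_eq_mul, card_powersetCard, card_univ]
  · have hmaps : ∀ R ∈ 𝒬.filter (fun R => ¬ #(Q ∩ R) < 2), #(Q ∩ R) ∈ Icc 2 k := fun R hR =>
      mem_Icc.2 ⟨by have := (mem_filter.1 hR).2; omega, hQ ▸ card_le_card inter_subset_left⟩
    rw [← sum_fiberwise_of_maps_to hmaps]
    refine sum_le_sum fun i _ => ?_
    calc ∑ R ∈ {R ∈ 𝒬 | ¬ #(Q ∩ R) < 2} with #(Q ∩ R) = i, g #(Q ∩ R)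
        = #{R ∈ {R ∈ 𝒬 | ¬ #(Q ∩ R) < 2} | #(Q ∩ R) = i} * g i := by
          rw [← nsmul_eq_mul, ← sum_const]
          exact sum_congr rfl fun R hR => by rw [(mem_filter.1 hR).2]
      _ ≤ ((k.choose i * (Fintype.card α - k).choose (k - i) : ℕ) : ℝ≥0∞) * g i := by
          gcongr
          refine (card_le_card fun R hR => ?_).trans
            (hQ ▸ card_powersetCard_filter_card_inter_le Q k i)
          simp only [mem_filter] at hR ⊢
          exact ⟨hR.1.1, hR.2⟩

theorem sum_choose_mul_choose_mul_ofReal_pow_le {δ r : ℝ} (hδ0 : 0 < δ) {n k : ℕ}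
    (hsum : ∑ i ∈ Icc 2 k, (k.choose i * (n - k).choose (k - i) : ℝ) * δ⁻¹ ^ i.choose 2
      ≤ r * n.choose k) :
    ∑ i ∈ Icc 2 k, ((k.choose i * (n - k).choose (k - i) : ℕ) : ℝ≥0∞) *
        ENNReal.ofReal δ ^ (2 * k.choose 2 - i.choose 2)
      ≤ ENNReal.ofReal r * n.choose k * ENNReal.ofReal δ ^ (2 * k.choose 2) := by
  set C := k.choose 2
  have hpow : ∀ i ∈ Icc 2 k, ENNReal.ofReal δ ^ (2 * C - i.choose 2)
      = ENNReal.ofReal (δ ^ (2 * C) * δ⁻¹ ^ i.choose 2) := by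
    intro i hi
    have : i.choose 2 ≤ 2 * C := by have := Nat.choose_le_choose 2 (mem_Icc.1 hi).2; omega
    rw [inv_pow, ← pow_sub₀ _ hδ0.ne' this, ENNReal.ofReal_pow hδ0.le]
  calc ∑ i ∈ Icc 2 k, ((k.choose i * (n - k).choose (k - i) : ℕ) : ℝ≥0∞) *
        ENNReal.ofReal δ ^ (2 * C - i.choose 2)
      = ENNReal.ofReal (∑ i ∈ Icc 2 k,
          (k.choose i * (n - k).choose (k - i) : ℝ) * (δ ^ (2 * C) * δ⁻¹ ^ i.choose 2)) := by
        rw [ENNReal.ofReal_sum_of_nonneg fun i _ => by positivity]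
        refine sum_congr rfl fun i hi => ?_
        rw [hpow i hi, ← ENNReal.ofReal_natCast, ← ENNReal.ofReal_mul (by positivity),
          Nat.cast_mul]
    _ ≤ ENNReal.ofReal (δ ^ (2 * C) * (r * n.choose k)) := by
        refine ENNReal.ofReal_le_ofReal ?_
        simp_rw [mul_left_comm _ (δ ^ (2 * C)), ← mul_sum]
        gcongr
    _ = ENNReal.ofReal r * n.choose k * ENNReal.ofReal δ ^ (2 * C) := by
        rw [ENNReal.ofReal_mul (by positivity), ENNReal.ofReal_mul' (by positivity),
          ENNReal.ofReal_pow hδ0.le, ENNReal.ofReal_natCast]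
        ring

end OverlapCount

section LowLabelEvents

variable {Ω : Type*} {n : ℕ} (lam : EdgeKn n → Ω → ℝ) (δ : ℝ)

def lowLabelEvent (Q : Finset (Fin n)) : Set Ω :=
  ⋂ e ∈ EdgeKn.edgesWithin Q, lam e ⁻¹' Set.Icc 0 δ

variable {lam δ}

theorem isTemporalClique_of_mem_lowLabelEvent {Q : Finset (Fin n)} {ω : Ω}
    (hω : ω ∈ lowLabelEvent lam δ Q) : IsTemporalClique (fun e => lam e ω) δ Q := by
  intro e e' he he'
  simp only [lowLabelEvent, Set.mem_iInter, Set.mem_preimage, Set.mem_Icc] at hω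
  have h := hω e (EdgeKn.mem_edgesWithin.2 he)
  have h' := hω e' (EdgeKn.mem_edgesWithin.2 he')
  exact abs_sub_le_iff.2 ⟨by linarith, by linarith⟩

variable [MeasurableSpace Ω]

theorem measurableSet_lowLabelEvent (hmeas : ∀ e, Measurable (lam e)) (Q : Finset (Fin n)) :
    MeasurableSet (lowLabelEvent lam δ Q) :=
  Finset.measurableSet_biInter _ fun e _ => hmeas e measurableSet_Icc

variable {P : Measure Ω} (hmeas : ∀ e, Measurable (lam e)) (hindep : iIndepFun lam P)
  (hunif : ∀ e, P.map (lam e) = volume.restrict (Set.Icc 0 1)) (hδ1 : δ ≤ 1)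
include hmeas hindep hunif hδ1

theorem measure_biInter_preimage_Icc (S : Finset (EdgeKn n)) :
    P (⋂ e ∈ S, lam e ⁻¹' Set.Icc 0 δ) = ENNReal.ofReal δ ^ #S := by
  have hedge : ∀ e, P (lam e ⁻¹' Set.Icc 0 δ) = ENNReal.ofReal δ := fun e => by
    rw [← Measure.map_apply (hmeas e) measurableSet_Icc, hunif e,
      Measure.restrict_apply measurableSet_Icc, Set.Icc_inter_Icc, Real.volume_Icc, max_self,
      min_eq_left hδ1, sub_zero]
  rw [hindep.meas_biInter fun e _ => ⟨Set.Icc 0 δ, measurableSet_Icc, rfl⟩]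
  simp [hedge]

theorem sum_measure_lowLabelEvent (k : ℕ) :
    ∑ Q ∈ (univ : Finset (Fin n)).powersetCard k, P (lowLabelEvent lam δ Q)
      = n.choose k * ENNReal.ofReal δ ^ k.choose 2 := by
  rw [sum_congr rfl fun Q hQ => by
      rw [lowLabelEvent, measure_biInter_preimage_Icc hmeas hindep hunif hδ1,
        EdgeKn.card_edgesWithin, mem_powersetCard_univ.1 hQ],
    sum_const, nsmul_eq_mul, card_powersetCard, card_univ, Fintype.card_fin]

theorem measure_lowLabelEvent_inter {k : ℕ} {Q R : Finset (Fin n)} (hQ : #Q = k) (hR : #R = k) :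
    P (lowLabelEvent lam δ Q ∩ lowLabelEvent lam δ R)
      = ENNReal.ofReal δ ^ (2 * k.choose 2 - (#(Q ∩ R)).choose 2) := by
  rw [lowLabelEvent, lowLabelEvent, ← Finset.set_biInter_inter,
    measure_biInter_preimage_Icc hmeas hindep hunif hδ1]
  congr 1
  have hunion := card_union_add_card_inter (EdgeKn.edgesWithin Q) (EdgeKn.edgesWithin R)
  have hle : (#(Q ∩ R)).choose 2 ≤ k.choose 2 :=
    Nat.choose_le_choose 2 (hQ ▸ card_le_card inter_subset_left)
  rw [EdgeKn.edgesWithin_inter, EdgeKn.card_edgesWithin, EdgeKn.card_edgesWithin,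
    EdgeKn.card_edgesWithin, hQ, hR] at hunion
  omega

theorem sum_sum_measure_lowLabelEvent_inter_le (hδ0 : 0 < δ) {k : ℕ} {r : ℝ}
    (hsum : ∑ i ∈ Icc 2 k, (k.choose i * (n - k).choose (k - i) : ℝ) * δ⁻¹ ^ i.choose 2
      ≤ r * n.choose k) :
    ∑ Q ∈ (univ : Finset (Fin n)).powersetCard k, ∑ R ∈ (univ : Finset (Fin n)).powersetCard k,
        P (lowLabelEvent lam δ Q ∩ lowLabelEvent lam δ R)
      ≤ (1 + ENNReal.ofReal r) * (n.choose k * ENNReal.ofReal δ ^ k.choose 2) ^ 2 := by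
  set 𝒬 := (univ : Finset (Fin n)).powersetCard k
  set d := ENNReal.ofReal δ
  have hcard : ∀ Q ∈ 𝒬, #Q = k := fun Q hQ => mem_powersetCard_univ.1 hQ
  calc ∑ Q ∈ 𝒬, ∑ R ∈ 𝒬, P (lowLabelEvent lam δ Q ∩ lowLabelEvent lam δ R)
      = ∑ Q ∈ 𝒬, ∑ R ∈ 𝒬, d ^ (2 * k.choose 2 - (#(Q ∩ R)).choose 2) :=
        sum_congr rfl fun Q hQ => sum_congr rfl fun R hR =>
          measure_lowLabelEvent_inter hmeas hindep hunif hδ1 (hcard Q hQ) (hcard R hR)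
    _ ≤ ∑ Q ∈ 𝒬, (n.choose k * d ^ (2 * k.choose 2)
          + ENNReal.ofReal r * n.choose k * d ^ (2 * k.choose 2)) := by
        refine sum_le_sum fun Q hQ => ?_
        refine (sum_powersetCard_le_of_card_inter (hcard Q hQ)
          (fun j => d ^ (2 * k.choose 2 - j.choose 2)) (b := d ^ (2 * k.choose 2))
          fun i hi => by simp [Nat.choose_eq_zero_of_lt hi]).trans ?_
        rw [Fintype.card_fin]
        gcongr
        exact sum_choose_mul_choose_mul_ofReal_pow_le hδ0 hsum
    _ = (1 + ENNReal.ofReal r) * (n.choose k * d ^ k.choose 2) ^ 2 := by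
        rw [sum_const, nsmul_eq_mul, card_powersetCard, card_univ, Fintype.card_fin]
        ring

theorem inv_one_add_le_measure_exists_temporalClique (hδ0 : 0 < δ) {k : ℕ} (hk : k ≤ n) {r : ℝ}
    (hsum : ∑ i ∈ Icc 2 k, (k.choose i * (n - k).choose (k - i) : ℝ) * δ⁻¹ ^ i.choose 2
      ≤ r * n.choose k) :
    (1 + ENNReal.ofReal r)⁻¹ ≤
      P {ω | ∃ Q : Finset (Fin n), #Q = k ∧ IsTemporalClique (fun e => lam e ω) δ Q} := by
  have hfirst := sum_measure_lowLabelEvent hmeas hindep hunif hδ1 k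
  have hpos : (n.choose k : ℝ≥0∞) * ENNReal.ofReal δ ^ k.choose 2 ≠ 0 :=
    mul_ne_zero (Nat.cast_ne_zero.2 (Nat.choose_pos hk).ne')
      (pow_ne_zero _ (ENNReal.ofReal_pos.2 hδ0).ne')
  have hfin : (n.choose k : ℝ≥0∞) * ENNReal.ofReal δ ^ k.choose 2 ≠ ∞ :=
    ENNReal.mul_ne_top (ENNReal.natCast_ne_top _) (ENNReal.pow_ne_top ENNReal.ofReal_ne_top)
  refine (inv_one_add_le_measure_biUnion P _ (fun Q _ => measurableSet_lowLabelEvent hmeas Q)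
    (hfirst ▸ hpos) (hfirst ▸ hfin)
    (hfirst ▸ sum_sum_measure_lowLabelEvent_inter_le hmeas hindep hunif hδ1 hδ0 hsum)).trans
    (measure_mono ?_)
  simp only [Set.iUnion_subset_iff]
  exact fun Q hQ ω hω =>
    ⟨Q, mem_powersetCard_univ.1 hQ, isTemporalClique_of_mem_lowLabelEvent hω⟩

end LowLabelEvents

section OverlapBound

variable {a y : ℝ} {n k : ℕ}

theorem pow_choose_two_le_pow (ha : 1 ≤ a) (hy : 0 ≤ y) (hak : a ^ k ≤ y ^ 2) {i : ℕ}
    (hi : i ≤ k) : a ^ i.choose 2 ≤ y ^ i := by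
  rw [← pow_le_pow_iff_left₀ (by positivity) (by positivity) two_ne_zero]
  calc (a ^ i.choose 2) ^ 2 = a ^ (i * (i - 1)) := by
        rw [← pow_mul, Nat.choose_two_right, Nat.div_two_mul_two_of_even (Nat.even_mul_pred_self i)]
    _ ≤ a ^ (i * k) := pow_le_pow_right₀ ha (Nat.mul_le_mul_left _ (by omega))
    _ = (a ^ k) ^ i := by rw [← pow_mul, mul_comm]
    _ ≤ (y ^ 2) ^ i := pow_le_pow_left₀ (by positivity) hak i
    _ = (y ^ i) ^ 2 := by rw [← pow_mul, ← pow_mul, mul_comm]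

variable (ha : 1 ≤ a) (hy : 0 ≤ y) (hak : a ^ k ≤ y ^ 2) (hkn : k < n)
include ha hy hak hkn

theorem choose_mul_choose_mul_pow_choose_two_le {i : ℕ} (hi : i ≤ k) :
    (k.choose i * (n - k).choose (k - i) : ℝ) * a ^ i.choose 2
      ≤ n.choose k * (k ^ 2 * y / (n - k)) ^ i := by
  have hnk : (0 : ℝ) < n - k := sub_pos.2 (by exact_mod_cast hkn)
  have hk : (k.choose i : ℝ) ≤ k ^ i := by exact_mod_cast Nat.choose_le_pow k i
  have hnk' : ((n - k).choose (k - i) : ℝ) * (n - k) ^ i ≤ n.choose k * k ^ i := by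
    rw [← Nat.cast_sub hkn.le]
    exact_mod_cast (Nat.mul_le_mul_right _ (Nat.choose_le_choose (k - i) (Nat.sub_le n k))).trans
      (Nat.choose_sub_mul_pow_le_choose_mul_pow hi)
  calc (k.choose i * (n - k).choose (k - i) : ℝ) * a ^ i.choose 2
      ≤ k ^ i * (n - k).choose (k - i) * y ^ i := by
        gcongr
        exact pow_choose_two_le_pow ha hy hak hi
    _ = k ^ i * ((n - k).choose (k - i) * (n - k) ^ i) * y ^ i / (n - k) ^ i := by
        field_simp
    _ ≤ k ^ i * (n.choose k * k ^ i) * y ^ i / (n - k) ^ i := by gcongr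
    _ = n.choose k * (k ^ 2 * y / (n - k)) ^ i := by
        rw [div_pow, mul_pow, ← pow_mul, mul_comm 2 i, pow_mul]
        ring

theorem sum_choose_mul_choose_mul_pow_choose_two_le (hx : k ^ 2 * y / (n - k) ≤ 1) :
    ∑ i ∈ Icc 2 k, (k.choose i * (n - k).choose (k - i) : ℝ) * a ^ i.choose 2
      ≤ k * (k ^ 2 * y / (n - k)) ^ 2 * n.choose k := by
  set x := (k : ℝ) ^ 2 * y / (n - k)
  have hx0 : 0 ≤ x := div_nonneg (by positivity) (sub_pos.2 (by exact_mod_cast hkn)).le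
  calc ∑ i ∈ Icc 2 k, (k.choose i * (n - k).choose (k - i) : ℝ) * a ^ i.choose 2
      ≤ ∑ i ∈ Icc 2 k, n.choose k * x ^ 2 := by
        refine sum_le_sum fun i hi => ?_
        exact (choose_mul_choose_mul_pow_choose_two_le ha hy hak hkn (mem_Icc.1 hi).2).trans
          (mul_le_mul_of_nonneg_left (pow_le_pow_of_le_one hx0 hx (mem_Icc.1 hi).1) (by positivity))
    _ = #(Icc 2 k) * (n.choose k * x ^ 2) := by rw [sum_const, nsmul_eq_mul]
    _ ≤ k * (n.choose k * x ^ 2) := by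
        gcongr
        rw [Nat.card_Icc]
        omega
    _ = k * x ^ 2 * n.choose k := by ring

end OverlapBound

open Filter Topology

section Asymptotics

theorem Filter.tendsto_one_of_inv_one_add_le {α : Type*} {l : Filter α} {p : α → ℝ≥0∞}
    {r : α → ℝ} (hr : Tendsto r l (𝓝 0)) (hp : ∀ x, p x ≤ 1)
    (hle : ∀ᶠ x in l, (1 + ENNReal.ofReal (r x))⁻¹ ≤ p x) : Tendsto p l (𝓝 1) := by
  have hlim : Tendsto (fun x => (1 + ENNReal.ofReal (r x))⁻¹) l (𝓝 1) := by
    have h := (tendsto_const_nhds (x := (1 : ℝ≥0∞))).add (ENNReal.tendsto_ofReal hr)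
    simpa using h.inv
  exact tendsto_of_tendsto_of_tendsto_of_le_of_le' hlim tendsto_const_nhds hle
    (Eventually.of_forall hp)

theorem pow_le_sq_of_mul_log_le {a y : ℝ} (ha : 0 < a) (hy : 0 < y) {k : ℕ}
    (h : k * Real.log a ≤ 2 * Real.log y) : a ^ k ≤ y ^ 2 := by
  rw [← Real.exp_log (pow_pos ha k), ← Real.exp_log (pow_pos hy 2), Real.log_pow, Real.log_pow]
  exact Real.exp_le_exp.2 (by exact_mod_cast h)

theorem natFloor_mul_div_mul_le {a b L : ℝ} (ha : 0 ≤ a) (hb : 0 ≤ b) (hL : 0 < L) :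
    (⌊a * (b / L)⌋₊ : ℝ) * L ≤ a * b :=
  calc (⌊a * (b / L)⌋₊ : ℝ) * L ≤ a * (b / L) * L := by
        gcongr
        exact Nat.floor_le (by positivity)
    _ = a * b := by field_simp

variable {K : ℕ → ℕ} {C : ℝ} (hK : ∀ n, (K n : ℝ) ≤ C * Real.log n)
include hK

theorem tendsto_pow_div_rpow_of_le_mul_log (a : ℕ) {b : ℝ} (hb : 0 < b) :
    Tendsto (fun n => (K n : ℝ) ^ a / (n : ℝ) ^ b) atTop (𝓝 0) := by
  have hlog : Tendsto (fun n : ℕ => Real.log n ^ a / (n : ℝ) ^ b) atTop (𝓝 0) := by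
    refine (((isLittleO_log_rpow_rpow_atTop a hb).tendsto_div_nhds_zero).comp
      tendsto_natCast_atTop_atTop).congr fun n => ?_
    simp [Real.rpow_natCast]
  refine squeeze_zero (fun n => by positivity) (fun n => ?_) (by simpa using hlog.const_mul (C ^ a))
  calc (K n : ℝ) ^ a / (n : ℝ) ^ b ≤ (C * Real.log n) ^ a / (n : ℝ) ^ b := by gcongr; exact hK n
    _ = C ^ a * (Real.log n ^ a / (n : ℝ) ^ b) := by ring

theorem tendsto_pow_mul_rpow_div_sub_of_le_mul_log (a : ℕ) {ε : ℝ} (hε : 0 < ε) :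
    Tendsto (fun n => (K n : ℝ) ^ a * (n : ℝ) ^ (1 - ε) / (n - K n)) atTop (𝓝 0) := by
  have hKn : Tendsto (fun n => (K n : ℝ) / n) atTop (𝓝 0) := by
    simpa using tendsto_pow_div_rpow_of_le_mul_log hK 1 one_pos
  have hinv : Tendsto (fun n => (1 - (K n : ℝ) / n)⁻¹) atTop (𝓝 1) := by
    simpa using ((tendsto_const_nhds (x := (1 : ℝ))).sub hKn).inv₀ (by norm_num)
  have hprod := (tendsto_pow_div_rpow_of_le_mul_log hK a hε).mul hinv
  rw [zero_mul] at hprod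
  refine hprod.congr' ((eventually_gt_atTop 0).mono fun n hn => ?_)
  have hn' : (0 : ℝ) < n := Nat.cast_pos.2 hn
  simp only [one_sub_div hn'.ne', inv_div, Real.rpow_sub hn', Real.rpow_one]
  ring

end Asymptotics

open Filter in
/-- For constants `δ ∈ (0,1)` and `ε ∈ (0,1)`, with `k₀(n) = 2 ln n / ln(1/δ)`,
the probability that `(K_n, λ)` contains a `δ`-temporal clique of size
`⌊(1-ε) k₀(n)⌋` tends to `1` as `n → ∞`. -/
theorem stmt15
    (δ : ℝ) (hδ0 : 0 < δ) (hδ1 : δ < 1) (ε : ℝ) (hε0 : 0 < ε) (hε1 : ε < 1)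
    {Ω : ℕ → Type*} [∀ n, MeasurableSpace (Ω n)]
    (P : ∀ n, Measure (Ω n)) (hP : ∀ n, IsProbabilityMeasure (P n))
    (lam : ∀ n, EdgeKn n → Ω n → ℝ) (hmeas : ∀ n e, Measurable (lam n e))
    (hindep : ∀ n, iIndepFun (lam n) (P n))
    (hunif : ∀ n e, Measure.map (lam n e) (P n) = (volume : Measure ℝ).restrict (Set.Icc 0 1)) :
    Tendsto
      (fun n =>
        P n {ω | ∃ Q : Finset (Fin n),
          Q.card = ⌊(1 - ε) * (2 * Real.log n / Real.log (1/δ))⌋₊ ∧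
          IsTemporalClique (fun e => lam n e ω) δ Q})
      atTop (nhds 1) := by
  set L := Real.log (1 / δ)
  have hL : 0 < L := Real.log_pos (one_lt_one_div hδ0 hδ1)
  set K : ℕ → ℕ := fun n => ⌊(1 - ε) * (2 * Real.log n / L)⌋₊
  have hKL : ∀ n : ℕ, (K n : ℝ) * L ≤ (1 - ε) * (2 * Real.log n) := fun n =>
    natFloor_mul_div_mul_le (sub_nonneg.2 hε1.le) (by positivity) hL
  have hKlog : ∀ n : ℕ, (K n : ℝ) ≤ 2 / L * Real.log n := fun n => by
    rw [div_mul_eq_mul_div, le_div_iff₀ hL]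
    nlinarith [hKL n, Real.log_natCast_nonneg n]
  set x : ℕ → ℝ := fun n => (K n : ℝ) ^ 2 * (n : ℝ) ^ (1 - ε) / (n - K n)
  have hx := tendsto_pow_mul_rpow_div_sub_of_le_mul_log hKlog 2 hε0
  have hr : Tendsto (fun n => K n * x n ^ 2) atTop (𝓝 0) := by
    have h := (tendsto_pow_mul_rpow_div_sub_of_le_mul_log hKlog 3 hε0).mul hx
    rw [zero_mul] at h
    exact h.congr fun n => by ring
  have hKn : ∀ᶠ n in atTop, (K n : ℝ) / n < 1 := by
    simpa using (tendsto_pow_div_rpow_of_le_mul_log hKlog 1 one_pos).eventually_lt_const one_pos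
  refine tendsto_one_of_inv_one_add_le hr (fun n => have := hP n; prob_le_one) ?_
  filter_upwards [eventually_gt_atTop 0, hKn, hx.eventually_le_const one_pos]
    with n hn hKn hx1
  have hn' : (0 : ℝ) < n := Nat.cast_pos.2 hn
  have hKn' : K n < n := by exact_mod_cast (div_lt_one hn').1 hKn
  have hpow : δ⁻¹ ^ K n ≤ ((n : ℝ) ^ (1 - ε)) ^ 2 :=
    pow_le_sq_of_mul_log_le (inv_pos.2 hδ0) (Real.rpow_pos_of_pos hn' _)
      (by rw [Real.log_rpow hn', ← one_div]; linarith [hKL n])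
  exact inv_one_add_le_measure_exists_temporalClique (hmeas n) (hindep n) (hunif n) hδ1.le hδ0
    hKn'.le (sum_choose_mul_choose_mul_pow_choose_two_le (one_le_inv₀ hδ0 |>.2 hδ1.le)
      (by positivity) hpow hKn' hx1)
end
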